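/- arXiv:2512.12407 — 4 statements merged into one kernel-verified Lean document; each statement's English description precedes it below -/
import Mathlib

section
/- (Lemma 3.4.) For i = 1, …, q let C_i ∈ ℂ^{p_i×p_i} be a matrix in *congruence canonical form given by explicit block data, i.e., C_i = ⊕_j J_{k_j^{(i)}}(0) ⊕ ⊕_j α_j^{(i)}Γ_{ℓ_j^{(i)}} ⊕ ⊕_j H_{2m_j^{(i)}}(μ_j^{(i)}) with |α_j^{(i)}| = 1 and |μ_j^{(i)}| > 1, and let A_i ∈ ℬ*(C_i). Suppose that for all i ≠ j: 𝒮*_{Γ,2}(C_i) ∩ 𝒮*_{Γ,2}(C_j) = ∅, 𝒮*_{Γ,2}(C_i) ∩ 𝒮*_{Γ,2,neg}(C_j) = ∅, and 𝒮*_H(C_i) ∩ 𝒮*_H(C_j) = ∅. Then A_1 ⊕ ⋯ ⊕ A_q belongs to the closure of ℬ*(C_1 ⊕ ⋯ ⊕ C_q). Moreover, if in addition A_i = P_i D_i P_iᴴ with P_i invertible and D_i a canonical matrix whose parameters satisfy the constraints in the definition of ℬ*(C_i), and the parameter-set disjointness conditions above hold with D_i, D_j in place of C_i, C_j for all i ≠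 j, then A_1 ⊕ ⋯ ⊕ A_q ∈ ℬ*(C_1 ⊕ ⋯ ⊕ C_q). -/
open Matrix

noncomputable section

/-- The `k × k` Jordan block `J_k(μ)` (eigenvalue `μ` on the diagonal, `1` on the
superdiagonal). -/
def Jblock (k : ℕ) (μ : ℂ) : Matrix (Fin k) (Fin k) ℂ :=
  Matrix.of fun i j =>
    if (j : ℕ) = (i : ℕ) then μ else if (j : ℕ) = (i : ℕ) + 1 then 1 else 0

/-- The `k × k` matrix `Γ_k`: in 1-based indexing, the `(i,j)` entry is `(-1)^(k-i)`
when `j = k+1-i` or `j = k+2-i`, and `0` otherwise. -/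
def Gamma (k : ℕ) : Matrix (Fin k) (Fin k) ℂ :=
  Matrix.of fun i j =>
    if (i : ℕ) + (j : ℕ) = k - 1 ∨ (i : ℕ) + (j : ℕ) = k then
      (-1 : ℂ) ^ (k - 1 - (i : ℕ)) else 0

/-- Block-diagonal direct sum of two square complex matrices. -/
def dsum {m n : ℕ} (A : Matrix (Fin m) (Fin m) ℂ) (B : Matrix (Fin n) (Fin n) ℂ) :
    Matrix (Fin (m + n)) (Fin (m + n)) ℂ :=
  Matrix.reindex finSumFinEquiv finSumFinEquiv (Matrix.fromBlocks A 0 0 B)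

/-- The `2k × 2k` matrix `H_{2k}(μ) = [[0, I_k], [J_k(μ), 0]]`. -/
def Hblock (k : ℕ) (μ : ℂ) : Matrix (Fin (k + k)) (Fin (k + k)) ℂ :=
  Matrix.reindex finSumFinEquiv finSumFinEquiv (Matrix.fromBlocks 0 1 (Jblock k μ) 0)

/-- The total size of a family of sizes `p : Fin q → ℕ`. -/
def finSize : {q : ℕ} → (Fin q → ℕ) → ℕ
  | 0, _ => 0
  | _ + 1, p => p 0 + finSize fun i => p i.succ

/-- Block-diagonal direct sum of a family of square complex matrices of sizes
`p 0, …, p (q-1)`. -/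
def finDsum : {q : ℕ} → (p : Fin q → ℕ) →
    ((i : Fin q) → Matrix (Fin (p i)) (Fin (p i)) ℂ) →
    Matrix (Fin (finSize p)) (Fin (finSize p)) ℂ
  | 0, _, _ => 0
  | _ + 1, p, M => dsum (M 0) (finDsum (fun i => p i.succ) fun i => M i.succ)

/-- Block data of a matrix in *congruence canonical form
`⊕ J_{k_i}(0) ⊕ ⊕ α_i Γ_{l_i} ⊕ ⊕ H_{2 m_i}(μ_i)`. -/
structure StarData : Type where
  n1 : ℕ
  n2 : ℕ
  n3 : ℕ
  k : Fin n1 → ℕ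
  l : Fin n2 → ℕ
  a : Fin n2 → ℂ
  m : Fin n3 → ℕ
  mu : Fin n3 → ℂ

/-- The size of the canonical matrix described by the block data. -/
def StarData.size (d : StarData) : ℕ :=
  finSize d.k + (finSize d.l + finSize fun i => d.m i + d.m i)

/-- The canonical matrix with the block structure of `d` but with the Type I and
Type II parameters replaced by `a` and `mu`. -/
def StarData.matWith (d : StarData) (a : Fin d.n2 → ℂ) (mu : Fin d.n3 → ℂ) :
    Matrix (Fin d.size) (Fin d.size) ℂ :=
  dsum (finDsum d.k fun i => Jblock (d.k i) 0)
    (dsum (finDsum d.l fun i => a i • Gamma (d.l i))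
      (finDsum (fun i => d.m i + d.m i) fun i => Hblock (d.m i) (mu i)))

/-- Validity of the block data: all sizes are at least `1`, `|α_i| = 1` and
`|μ_i| > 1`. -/
def StarData.Valid (d : StarData) : Prop :=
  (∀ i, 1 ≤ d.k i) ∧ (∀ i, 1 ≤ d.l i) ∧ (∀ i, 1 ≤ d.m i) ∧
    (∀ i, ‖d.a i‖ = 1) ∧ ∀ i, 1 < ‖d.mu i‖

/-- The constraints that the replaced parameters must satisfy in the definition of the
*congruence bundle of `d`. -/
def StarData.ParamsOK (d : StarData) (a : Fin d.n2 → ℂ) (mu : Fin d.n3 → ℂ) : Prop :=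
  (∀ i, ‖a i‖ = 1) ∧ (∀ i, 1 < ‖mu i‖) ∧
    (∀ i j, d.l i % 2 = d.l j % 2 → (a i ^ 2 ≠ a j ^ 2 ↔ d.a i ^ 2 ≠ d.a j ^ 2)) ∧
    (∀ i j, d.l i % 2 ≠ d.l j % 2 → (a i ^ 2 ≠ -(a j ^ 2) ↔ d.a i ^ 2 ≠ -(d.a j ^ 2))) ∧
    ∀ i j, mu i ≠ mu j ↔ d.mu i ≠ d.mu j

/-- The *congruence bundle `ℬ*(C)` of the canonical matrix `C` described by the block
data `d`. -/
def starBundle (d : StarData) : Set (Matrix (Fin d.size) (Fin d.size) ℂ) :=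
  {A | ∃ (a : Fin d.n2 → ℂ) (mu : Fin d.n3 → ℂ) (P : Matrix (Fin d.size) (Fin d.size) ℂ),
    IsUnit P ∧ d.ParamsOK a mu ∧ A = P * d.matWith a mu * Pᴴ}

/-- The parameter set `𝒮*_{Γ,2}(C) = {α_i² : 1 ≤ i ≤ n2}`. -/
def StarData.SG2 (d : StarData) : Set ℂ := Set.range fun i => d.a i ^ 2

/-- The parameter set `𝒮*_{Γ,2,neg}(C) = {-α_i² : 1 ≤ i ≤ n2}`. -/
def StarData.SG2neg (d : StarData) : Set ℂ := Set.range fun i => -(d.a i ^ 2)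

/-- The parameter set `𝒮*_H(C) = {μ_i : 1 ≤ i ≤ n3}`. -/
def StarData.SH (d : StarData) : Set ℂ := Set.range d.mu

/-- The direct sum of two canonical matrices: concatenation of the block data. -/
def StarData.append (d e : StarData) : StarData :=
  ⟨d.n1 + e.n1, d.n2 + e.n2, d.n3 + e.n3, Fin.append d.k e.k, Fin.append d.l e.l,
    Fin.append d.a e.a, Fin.append d.m e.m, Fin.append d.mu e.mu⟩

/-- The direct sum `C_1 ⊕ ⋯ ⊕ C_q` of a family of canonical matrices: concatenation of
the block data.  -/
def appendAll : {q : ℕ} → (Fin q → StarData) → StarData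
  | 0, _ => ⟨0, 0, 0, Fin.elim0, Fin.elim0, Fin.elim0, Fin.elim0, Fin.elim0⟩
  | _ + 1, C => StarData.append (C 0) (appendAll fun i => C i.succ)

/-!
A block-diagonal matrix is determined up to permutation `*`-congruence by the multiset of its
blocks, so `A_1 ⊕ ⋯ ⊕ A_q` is `*`-congruent to the canonical matrix of the concatenated block
data with the concatenated parameters of the `A_i`. When no parameter of one summand collides
with one of another (the disjointness conditions, for the `C_i` and for the `A_i`), the
concatenated parameters still satisfy the constraints of `ℬ*(C_1 ⊕ ⋯ ⊕ C_q)`, which gives the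
second statement. For the first, multiply the parameters of the `i`-th summand by `exp(√-1·i·t)`:
this keeps each summand in its bundle and tends to `A_i` as `t → 0`, while a collision between
the summands `i ≠ j` fixes the value of `exp(√-1·(i-j)·t)` or `exp(2√-1·(i-j)·t)`, which
happens for only countably many `t`.
-/

def StarCongruent {m n : Type*} [Fintype m] [Fintype n] [DecidableEq m] [DecidableEq n]
    (A : Matrix m m ℂ) (B : Matrix n n ℂ) : Prop :=
  ∃ (P : Matrix m n ℂ) (Q : Matrix n m ℂ), P * Q = 1 ∧ Q * P = 1 ∧ A = P * B * Pᴴ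

namespace StarCongruent

variable {l m n o : Type*} [Fintype l] [Fintype m] [Fintype n] [Fintype o]
  [DecidableEq l] [DecidableEq m] [DecidableEq n] [DecidableEq o]

@[refl]
theorem refl (A : Matrix m m ℂ) : StarCongruent A A :=
  ⟨1, 1, mul_one 1, mul_one 1, by simp⟩

@[symm]
theorem symm {A : Matrix m m ℂ} {B : Matrix n n ℂ} (h : StarCongruent A B) :
    StarCongruent B A := by
  obtain ⟨P, Q, hPQ, hQP, rfl⟩ := h
  refine ⟨Q, P, hQP, hPQ, ?_⟩
  calc B = (Q * P) * B * (Q * P)ᴴ := by simp [hQP]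
    _ = Q * (P * B * Pᴴ) * Qᴴ := by simp only [conjTranspose_mul, Matrix.mul_assoc]

@[trans]
theorem trans {A : Matrix l l ℂ} {B : Matrix m m ℂ} {D : Matrix n n ℂ}
    (h : StarCongruent A B) (h' : StarCongruent B D) : StarCongruent A D := by
  obtain ⟨P, Q, hPQ, hQP, rfl⟩ := h
  obtain ⟨P', Q', hPQ', hQP', rfl⟩ := h'
  refine ⟨P * P', Q' * Q, ?_, ?_, by simp only [conjTranspose_mul, Matrix.mul_assoc]⟩
  · rw [Matrix.mul_assoc, ← Matrix.mul_assoc P', hPQ', Matrix.one_mul, hPQ]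
  · rw [Matrix.mul_assoc, ← Matrix.mul_assoc Q, hQP, Matrix.one_mul, hQP']

theorem of_isUnit {P : Matrix m m ℂ} (hP : IsUnit P) (B : Matrix m m ℂ) :
    StarCongruent (P * B * Pᴴ) B :=
  ⟨P, ↑hP.unit⁻¹, hP.mul_val_inv, hP.val_inv_mul, rfl⟩

theorem submatrix (e : m ≃ n) (B : Matrix n n ℂ) : StarCongruent (B.submatrix e e) B := by
  have hT : (e.toPEquiv.toMatrix : Matrix m n ℂ)ᴴ = e.symm.toPEquiv.toMatrix := by
    ext i j
    simp [PEquiv.toMatrix_apply, conjTranspose_apply, apply_ite (star : ℂ → ℂ),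
      Equiv.eq_symm_apply, eq_comm]
  refine ⟨e.toPEquiv.toMatrix, e.symm.toPEquiv.toMatrix, ?_, ?_, ?_⟩
  · rw [← PEquiv.toMatrix_trans, ← Equiv.toPEquiv_trans, Equiv.self_trans_symm,
      Equiv.toPEquiv_refl, PEquiv.toMatrix_refl]
  · rw [← PEquiv.toMatrix_trans, ← Equiv.toPEquiv_trans, Equiv.symm_trans_self,
      Equiv.toPEquiv_refl, PEquiv.toMatrix_refl]
  · rw [hT, PEquiv.toMatrix_toPEquiv_mul, PEquiv.mul_toMatrix_toPEquiv]
    rfl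

theorem reindex (e : m ≃ n) (A : Matrix m m ℂ) : StarCongruent (reindex e e A) A :=
  submatrix e.symm A

theorem of_isEmpty [IsEmpty m] [IsEmpty n] (A : Matrix m m ℂ) (B : Matrix n n ℂ) :
    StarCongruent A B :=
  ⟨0, 0, Subsingleton.elim _ _, Subsingleton.elim _ _, Subsingleton.elim _ _⟩

theorem fromBlocks {A : Matrix l l ℂ} {A' : Matrix m m ℂ} {B : Matrix n n ℂ}
    {B' : Matrix o o ℂ} (hA : StarCongruent A A') (hB : StarCongruent B B') :
    StarCongruent (fromBlocks A 0 0 B) (fromBlocks A' 0 0 B') := by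
  obtain ⟨P, Q, hPQ, hQP, rfl⟩ := hA
  obtain ⟨P', Q', hPQ', hQP', rfl⟩ := hB
  refine ⟨Matrix.fromBlocks P 0 0 P', Matrix.fromBlocks Q 0 0 Q', ?_, ?_, ?_⟩ <;>
    simp [fromBlocks_multiply, fromBlocks_conjTranspose, hPQ, hQP, hPQ', hQP']

theorem fromBlocks_comm (A : Matrix m m ℂ) (B : Matrix n n ℂ) :
    StarCongruent (Matrix.fromBlocks A 0 0 B) (Matrix.fromBlocks B 0 0 A) := by
  convert submatrix (Equiv.sumComm m n) (Matrix.fromBlocks B 0 0 A) using 1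
  ext (i | i) (j | j) <;> rfl

theorem fromBlocks_assoc (A : Matrix l l ℂ) (B : Matrix m m ℂ) (D : Matrix n n ℂ) :
    StarCongruent (Matrix.fromBlocks (Matrix.fromBlocks A 0 0 B) 0 0 D)
      (Matrix.fromBlocks A 0 0 (Matrix.fromBlocks B 0 0 D)) := by
  convert submatrix (Equiv.sumAssoc l m n) (Matrix.fromBlocks A 0 0 (Matrix.fromBlocks B 0 0 D))
    using 1
  ext ((i | i) | i) ((j | j) | j) <;> rfl

end StarCongruent

theorem StarCongruent.dsum {k k' p p' : ℕ} {A : Matrix (Fin k) (Fin k) ℂ}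
    {A' : Matrix (Fin k') (Fin k') ℂ} {B : Matrix (Fin p) (Fin p) ℂ}
    {B' : Matrix (Fin p') (Fin p') ℂ} (hA : StarCongruent A A') (hB : StarCongruent B B') :
    StarCongruent (dsum A B) (dsum A' B') :=
  (StarCongruent.reindex _ _).trans ((hA.fromBlocks hB).trans (StarCongruent.reindex _ _).symm)

theorem starCongruent_dsum_comm {k p : ℕ} (A : Matrix (Fin k) (Fin k) ℂ)
    (B : Matrix (Fin p) (Fin p) ℂ) : StarCongruent (dsum A B) (dsum B A) :=
  (StarCongruent.reindex _ _).trans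
    ((StarCongruent.fromBlocks_comm A B).trans (StarCongruent.reindex _ _).symm)

theorem starCongruent_dsum_assoc {k p r : ℕ} (A : Matrix (Fin k) (Fin k) ℂ)
    (B : Matrix (Fin p) (Fin p) ℂ) (D : Matrix (Fin r) (Fin r) ℂ) :
    StarCongruent (dsum (dsum A B) D) (dsum A (dsum B D)) := by
  refine (StarCongruent.reindex _ _).trans (.trans ?_ (StarCongruent.reindex _ _).symm)
  refine ((StarCongruent.reindex _ _).fromBlocks (.refl D)).trans (.trans ?_
    ((StarCongruent.refl A).fromBlocks (StarCongruent.reindex _ _)).symm)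
  exact StarCongruent.fromBlocks_assoc A B D

theorem starCongruent_dsum_left_comm {k p r : ℕ} (A : Matrix (Fin k) (Fin k) ℂ)
    (B : Matrix (Fin p) (Fin p) ℂ) (D : Matrix (Fin r) (Fin r) ℂ) :
    StarCongruent (dsum A (dsum B D)) (dsum B (dsum A D)) :=
  (starCongruent_dsum_assoc A B D).symm.trans <|
    ((starCongruent_dsum_comm A B).dsum (.refl D)).trans (starCongruent_dsum_assoc B A D)

theorem starCongruent_dsum_of_isEmpty {p : ℕ} (Z : Matrix (Fin 0) (Fin 0) ℂ)
    (B : Matrix (Fin p) (Fin p) ℂ) : StarCongruent (dsum Z B) B := by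
  refine (StarCongruent.reindex _ _).trans ?_
  convert StarCongruent.submatrix (Equiv.emptySum (Fin 0) (Fin p)) B using 1
  ext (i | i) (j | j)
  exacts [i.elim0, i.elim0, j.elim0, rfl]

def blockSum : List (Σ n, Matrix (Fin n) (Fin n) ℂ) → Σ n, Matrix (Fin n) (Fin n) ℂ
  | [] => ⟨0, 0⟩
  | M :: L => ⟨M.1 + (blockSum L).1, dsum M.2 (blockSum L).2⟩

theorem starCongruent_blockSum_append (L L' : List (Σ n, Matrix (Fin n) (Fin n) ℂ)) :
    StarCongruent (blockSum (L ++ L')).2 (dsum (blockSum L).2 (blockSum L').2) := by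
  induction L with
  | nil => exact (starCongruent_dsum_of_isEmpty _ _).symm
  | cons M L ih =>
    exact ((StarCongruent.refl M.2).dsum ih).trans (starCongruent_dsum_assoc _ _ _).symm

theorem List.Perm.starCongruent_blockSum {L L' : List (Σ n, Matrix (Fin n) (Fin n) ℂ)}
    (h : L.Perm L') : StarCongruent (blockSum L).2 (blockSum L').2 := by
  induction h with
  | nil => rfl
  | cons M _ ih => exact (StarCongruent.refl M.2).dsum ih
  | swap M M' L => exact starCongruent_dsum_left_comm _ _ _
  | trans _ _ ih ih' => exact ih.trans ih'

theorem starCongruent_finDsum_blockSum {q : ℕ} (p : Fin q → ℕ)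
    (M : (i : Fin q) → Matrix (Fin (p i)) (Fin (p i)) ℂ) :
    StarCongruent (finDsum p M) (blockSum (List.ofFn fun i => ⟨p i, M i⟩)).2 := by
  induction q with
  | zero => exact StarCongruent.of_isEmpty (m := Fin 0) (n := Fin 0) _ _
  | succ q ih =>
    rw [List.ofFn_succ]
    exact (StarCongruent.refl (M 0)).dsum (ih _ _)

namespace StarData

def blocks (d : StarData) (a : Fin d.n2 → ℂ) (mu : Fin d.n3 → ℂ) :
    List (Σ n, Matrix (Fin n) (Fin n) ℂ) :=
  (List.ofFn fun i => d.k i).map (fun k => ⟨k, Jblock k 0⟩) ++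
    (List.ofFn fun i => (d.l i, a i)).map (fun p => ⟨p.1, p.2 • Gamma p.1⟩) ++
    (List.ofFn fun i => (d.m i, mu i)).map (fun p => ⟨p.1 + p.1, Hblock p.1 p.2⟩)

theorem starCongruent_matWith_blockSum (d : StarData) (a : Fin d.n2 → ℂ)
    (mu : Fin d.n3 → ℂ) : StarCongruent (d.matWith a mu) (blockSum (d.blocks a mu)).2 := by
  rw [blocks, List.append_assoc, List.map_ofFn, List.map_ofFn, List.map_ofFn]
  refine .trans ?_ (starCongruent_blockSum_append _ _).symm
  refine (starCongruent_finDsum_blockSum _ _).dsum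
    (.trans ?_ (starCongruent_blockSum_append _ _).symm)
  exact (starCongruent_finDsum_blockSum _ _).dsum (starCongruent_finDsum_blockSum _ _)

theorem blocks_append_perm (d e : StarData) (a : Fin d.n2 → ℂ) (a' : Fin e.n2 → ℂ)
    (mu : Fin d.n3 → ℂ) (mu' : Fin e.n3 → ℂ) :
    ((d.append e).blocks (Fin.append a a') (Fin.append mu mu')).Perm
      (d.blocks a mu ++ e.blocks a' mu') := by
  simp only [blocks, append, List.ofFn_add, Fin.append_left', Fin.append_right, List.map_append]
  classical
  exact List.perm_iff_count.2 fun _ => by simp only [List.count_append]; omega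

theorem starCongruent_matWith_append (d e : StarData) (a : Fin d.n2 → ℂ) (a' : Fin e.n2 → ℂ)
    (mu : Fin d.n3 → ℂ) (mu' : Fin e.n3 → ℂ) :
    StarCongruent (dsum (d.matWith a mu) (e.matWith a' mu'))
      ((d.append e).matWith (Fin.append a a') (Fin.append mu mu')) := by
  refine .trans ?_ (starCongruent_matWith_blockSum _ _ _).symm
  refine .trans ?_ (blocks_append_perm d e a a' mu mu').symm.starCongruent_blockSum
  exact ((starCongruent_matWith_blockSum d a mu).dsum
    (starCongruent_matWith_blockSum e a' mu')).trans (starCongruent_blockSum_append _ _).symm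

end StarData

theorem finSize_eq_sum {q : ℕ} (p : Fin q → ℕ) : finSize p = ∑ i, p i := by
  induction q with
  | zero => rfl
  | succ q ih => rw [Fin.sum_univ_succ, ← ih]; rfl

theorem StarData.size_append (d e : StarData) : (d.append e).size = d.size + e.size := by
  simp only [size, append, finSize_eq_sum, Fin.sum_univ_add, Fin.append_left, Fin.append_right]
  ring

theorem finSize_size_eq_size_appendAll {q : ℕ} (C : Fin q → StarData) :
    finSize (fun i => (C i).size) = (appendAll C).size := by
  induction q with
  | zero => rfl
  | succ q ih => exact (congrArg _ (ih _)).trans (StarData.size_append _ _).symm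

/-- No coincidence between the two parameter families that `StarData.ParamsOK` of their
concatenation would compare. -/
def ParamsApart {n₂ n₃ n₂' n₃' : ℕ} (a : Fin n₂ → ℂ) (mu : Fin n₃ → ℂ) (a' : Fin n₂' → ℂ)
    (mu' : Fin n₃' → ℂ) : Prop :=
  (∀ s u, a s ^ 2 ≠ a' u ^ 2 ∧ a s ^ 2 ≠ -(a' u ^ 2) ∧ a' u ^ 2 ≠ -(a s ^ 2)) ∧
    ∀ s u, mu s ≠ mu' u

theorem StarData.ParamsOK.append {d e : StarData} {a : Fin d.n2 → ℂ} {mu : Fin d.n3 → ℂ}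
    {a' : Fin e.n2 → ℂ} {mu' : Fin e.n3 → ℂ} (hd : d.ParamsOK a mu) (he : e.ParamsOK a' mu')
    (h : ParamsApart a mu a' mu') (hde : ParamsApart d.a d.mu e.a e.mu) :
    (d.append e).ParamsOK (Fin.append a a') (Fin.append mu mu') := by
  obtain ⟨hd₁, hd₂, hd₃, hd₄, hd₅⟩ := hd
  obtain ⟨he₁, he₂, he₃, he₄, he₅⟩ := he
  obtain ⟨ha, hmu⟩ := h
  obtain ⟨hCa, hCmu⟩ := hde
  refine ⟨Fin.addCases (by simpa using hd₁) (by simpa using he₁),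
    Fin.addCases (by simpa using hd₂) (by simpa using he₂), ?_, ?_, ?_⟩ <;>
  intro i j <;>
  induction i using Fin.addCases <;> induction j using Fin.addCases <;>
  simp only [StarData.append, Fin.append_left, Fin.append_right]
  -- for each of the three pairwise conditions, the index pairs (d, d), (d, e), (e, d), (e, e)
  exacts [hd₃ _ _, fun _ => iff_of_true (ha _ _).1 (hCa _ _).1,
    fun _ => iff_of_true (ha _ _).1.symm (hCa _ _).1.symm, he₃ _ _,
    hd₄ _ _, fun _ => iff_of_true (ha _ _).2.1 (hCa _ _).2.1,
    fun _ => iff_of_true (ha _ _).2.2 (hCa _ _).2.2, he₄ _ _,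
    hd₅ _ _, iff_of_true (hmu _ _) (hCmu _ _),
    iff_of_true (hmu _ _).symm (hCmu _ _).symm, he₅ _ _]

theorem paramsApart_of_inter_eq_empty {n₂ n₃ n₂' n₃' : ℕ} {a : Fin n₂ → ℂ} {mu : Fin n₃ → ℂ}
    {a' : Fin n₂' → ℂ} {mu' : Fin n₃' → ℂ}
    (h₁ : Set.range (fun s => a s ^ 2) ∩ Set.range (fun u => a' u ^ 2) = ∅)
    (h₂ : Set.range (fun s => a s ^ 2) ∩ Set.range (fun u => -(a' u ^ 2)) = ∅)
    (h₂' : Set.range (fun u => a' u ^ 2) ∩ Set.range (fun s => -(a s ^ 2)) = ∅)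
    (h₃ : Set.range mu ∩ Set.range mu' = ∅) : ParamsApart a mu a' mu' := by
  simp only [Set.eq_empty_iff_forall_notMem, Set.mem_inter_iff, Set.mem_range,
    not_and, forall_exists_index, forall_apply_eq_imp_iff, not_exists] at h₁ h₂ h₂' h₃
  exact ⟨fun s u => ⟨fun h => h₁ s u h.symm, fun h => h₂ s u h.symm, fun h => h₂' u s h.symm⟩,
    fun s u h => h₃ s u h.symm⟩

theorem ParamsApart.append_right {n₂ n₃ n₂' n₃' n₂'' n₃'' : ℕ} {a : Fin n₂ → ℂ}
    {mu : Fin n₃ → ℂ} {a' : Fin n₂' → ℂ} {mu' : Fin n₃' → ℂ} {a'' : Fin n₂'' → ℂ}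
    {mu'' : Fin n₃'' → ℂ} (h : ParamsApart a mu a' mu') (h' : ParamsApart a mu a'' mu'') :
    ParamsApart a mu (Fin.append a' a'') (Fin.append mu' mu'') :=
  ⟨fun s => Fin.addCases (by simpa using h.1 s) (by simpa using h'.1 s),
    fun s => Fin.addCases (by simpa using h.2 s) (by simpa using h'.2 s)⟩

def appendAllA : {q : ℕ} → (C : Fin q → StarData) → ((i : Fin q) → Fin (C i).n2 → ℂ) →
    Fin (appendAll C).n2 → ℂ
  | 0, _, _ => Fin.elim0
  | _ + 1, C, a => Fin.append (a 0) (appendAllA (fun i => C i.succ) (fun i => a i.succ))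

def appendAllMu : {q : ℕ} → (C : Fin q → StarData) → ((i : Fin q) → Fin (C i).n3 → ℂ) →
    Fin (appendAll C).n3 → ℂ
  | 0, _, _ => Fin.elim0
  | _ + 1, C, mu => Fin.append (mu 0) (appendAllMu (fun i => C i.succ) (fun i => mu i.succ))

theorem appendAll_a {q : ℕ} (C : Fin q → StarData) :
    (appendAll C).a = appendAllA C fun i => (C i).a := by
  induction q with
  | zero => exact funext fun i => i.elim0
  | succ q ih => exact congrArg (Fin.append _) (ih _)

theorem appendAll_mu {q : ℕ} (C : Fin q → StarData) :
    (appendAll C).mu = appendAllMu C fun i => (C i).mu := by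
  induction q with
  | zero => exact funext fun i => i.elim0
  | succ q ih => exact congrArg (Fin.append _) (ih _)

theorem ParamsApart.appendAll {n₂ n₃ q : ℕ} {a₀ : Fin n₂ → ℂ} {mu₀ : Fin n₃ → ℂ}
    {C : Fin q → StarData} {a : (i : Fin q) → Fin (C i).n2 → ℂ}
    {mu : (i : Fin q) → Fin (C i).n3 → ℂ} (h : ∀ i, ParamsApart a₀ mu₀ (a i) (mu i)) :
    ParamsApart a₀ mu₀ (appendAllA C a) (appendAllMu C mu) := by
  induction q with
  | zero => exact ⟨fun _ u => u.elim0, fun _ u => u.elim0⟩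
  | succ q ih => exact (h 0).append_right (ih fun i => h i.succ)

theorem StarData.ParamsOK.appendAll {q : ℕ} {C : Fin q → StarData}
    {a : (i : Fin q) → Fin (C i).n2 → ℂ} {mu : (i : Fin q) → Fin (C i).n3 → ℂ}
    (hOK : ∀ i, (C i).ParamsOK (a i) (mu i))
    (h : Pairwise fun i j => ParamsApart (a i) (mu i) (a j) (mu j))
    (hC : Pairwise fun i j => ParamsApart (C i).a (C i).mu (C j).a (C j).mu) :
    (appendAll C).ParamsOK (appendAllA C a) (appendAllMu C mu) := by
  induction q with
  | zero => exact ⟨fun i => i.elim0, fun i => i.elim0, fun i => i.elim0, fun i => i.elim0,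
      fun i => i.elim0⟩
  | succ q ih =>
    refine (hOK 0).append (ih (fun i => hOK i.succ) (h.comp_of_injective (Fin.succ_injective _))
      (hC.comp_of_injective (Fin.succ_injective _)))
      (ParamsApart.appendAll fun i => h (Fin.succ_ne_zero i).symm) ?_
    rw [appendAll_a, appendAll_mu]
    exact ParamsApart.appendAll fun i => hC (Fin.succ_ne_zero i).symm

theorem starCongruent_finDsum_matWith_appendAll {q : ℕ} {C : Fin q → StarData}
    {A : (i : Fin q) → Matrix (Fin (C i).size) (Fin (C i).size) ℂ}
    {a : (i : Fin q) → Fin (C i).n2 → ℂ} {mu : (i : Fin q) → Fin (C i).n3 → ℂ}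
    (hA : ∀ i, StarCongruent (A i) ((C i).matWith (a i) (mu i))) :
    StarCongruent (finDsum (fun i => (C i).size) A)
      ((appendAll C).matWith (appendAllA C a) (appendAllMu C mu)) := by
  induction q with
  | zero => exact StarCongruent.of_isEmpty (m := Fin 0) (n := Fin 0) _ _
  | succ q ih =>
    exact ((hA 0).dsum (ih fun i => hA i.succ)).trans (StarData.starCongruent_matWith_append ..)

theorem mem_starBundle_of_starCongruent {d : StarData} {A : Matrix (Fin d.size) (Fin d.size) ℂ}
    {a : Fin d.n2 → ℂ} {mu : Fin d.n3 → ℂ} (hOK : d.ParamsOK a mu)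
    (h : StarCongruent A (d.matWith a mu)) : A ∈ starBundle d := by
  obtain ⟨P, Q, hPQ, hQP, hA⟩ := h
  exact ⟨a, mu, P, ⟨⟨P, Q, hPQ, hQP⟩, rfl⟩, hOK, hA⟩

theorem reindex_finDsum_mem_starBundle {q : ℕ} {C : Fin q → StarData}
    {A : (i : Fin q) → Matrix (Fin (C i).size) (Fin (C i).size) ℂ}
    {a : (i : Fin q) → Fin (C i).n2 → ℂ} {mu : (i : Fin q) → Fin (C i).n3 → ℂ}
    (hOK : ∀ i, (C i).ParamsOK (a i) (mu i))
    (hA : ∀ i, StarCongruent (A i) ((C i).matWith (a i) (mu i)))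
    (h : Pairwise fun i j => ParamsApart (a i) (mu i) (a j) (mu j))
    (hC : Pairwise fun i j => ParamsApart (C i).a (C i).mu (C j).a (C j).mu) :
    reindex (finCongr (finSize_size_eq_size_appendAll C))
      (finCongr (finSize_size_eq_size_appendAll C)) (finDsum (fun i => (C i).size) A) ∈
      starBundle (appendAll C) :=
  mem_starBundle_of_starCongruent (.appendAll hOK h hC)
    ((StarCongruent.reindex _ _).trans (starCongruent_finDsum_matWith_appendAll hA))

def rotate {n : ℕ} (θ : ℝ) (a : Fin n → ℂ) : Fin n → ℂ :=
  fun s => Complex.exp (θ * Complex.I) * a s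

theorem rotate_apply_sq {n : ℕ} (θ : ℝ) (a : Fin n → ℂ) (s : Fin n) :
    rotate θ a s ^ 2 = Complex.exp (↑(2 * θ) * Complex.I) * a s ^ 2 := by
  rw [rotate, mul_pow, ← Complex.exp_nat_mul]
  push_cast
  ring_nf

theorem rotate_zero {n : ℕ} (a : Fin n → ℂ) : rotate 0 a = a := by
  ext s
  simp [rotate]

theorem continuous_rotate_mul {n : ℕ} (c : ℝ) (a : Fin n → ℂ) :
    Continuous fun t : ℝ => rotate (c * t) a := by
  unfold rotate
  fun_prop

theorem StarData.ParamsOK.rotate {d : StarData} {a : Fin d.n2 → ℂ} {mu : Fin d.n3 → ℂ}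
    (h : d.ParamsOK a mu) (θ : ℝ) : d.ParamsOK (rotate θ a) (rotate θ mu) := by
  obtain ⟨h₁, h₂, h₃, h₄, h₅⟩ := h
  have hθ : ∀ θ : ℝ, Complex.exp (θ * Complex.I) ≠ 0 := fun _ => Complex.exp_ne_zero _
  refine ⟨fun s => ?_, fun s => ?_, fun i j hij => ?_, fun i j hij => ?_, fun i j => ?_⟩
  · simpa [_root_.rotate, Complex.norm_exp_ofReal_mul_I] using h₁ s
  · simpa [_root_.rotate, Complex.norm_exp_ofReal_mul_I] using h₂ s
  · simpa only [rotate_apply_sq, ← mul_neg, Ne, mul_right_inj' (hθ _)] using h₃ i j hij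
  · simpa only [rotate_apply_sq, ← mul_neg, Ne, mul_right_inj' (hθ _)] using h₄ i j hij
  · simpa only [_root_.rotate, Ne, mul_right_inj' (hθ _)] using h₅ i j

theorem countable_setOf_exp_mul_I_eq {c : ℝ} (hc : c ≠ 0) (w : ℂ) :
    {t : ℝ | Complex.exp (↑(c * t) * Complex.I) = w}.Countable := by
  obtain h | ⟨t₀, ht₀⟩ :=
    Set.eq_empty_or_nonempty {t : ℝ | Complex.exp (↑(c * t) * Complex.I) = w}
  · exact h ▸ Set.countable_empty
  refine (Set.countable_range fun n : ℤ => t₀ + n * (2 * Real.pi) / c).mono fun t ht => ?_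
  obtain ⟨n, hn⟩ := Complex.exp_eq_exp_iff_exists_int.1 (ht.trans ht₀.symm)
  have : c * t = c * t₀ + n * (2 * Real.pi) := by
    simpa using congrArg Complex.im hn
  exact ⟨n, by field_simp; linarith⟩

theorem countable_setOf_exp_mul_eq {c c' : ℝ} (hc : c ≠ c') {x : ℂ} (hx : x ≠ 0) (y : ℂ) :
    {t : ℝ | Complex.exp (↑(c * t) * Complex.I) * x =
      Complex.exp (↑(c' * t) * Complex.I) * y}.Countable := by
  refine (countable_setOf_exp_mul_I_eq (sub_ne_zero.2 hc) (y / x)).mono fun t ht => ?_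
  simp only [Set.mem_ofPred_eq, sub_mul, Complex.ofReal_sub, Complex.exp_sub] at ht ⊢
  rw [div_eq_div_iff (Complex.exp_ne_zero _) hx, ht, mul_comm]

theorem countable_setOf_not_paramsApart_rotate {n₂ n₃ n₂' n₃' : ℕ} {a : Fin n₂ → ℂ}
    {mu : Fin n₃ → ℂ} {a' : Fin n₂' → ℂ} {mu' : Fin n₃' → ℂ} {c c' : ℝ} (hc : c ≠ c')
    (ha : ∀ s, a s ≠ 0) (ha' : ∀ u, a' u ≠ 0) (hmu : ∀ s, mu s ≠ 0) :
    {t : ℝ | ¬ParamsApart (rotate (c * t) a) (rotate (c * t) mu)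
      (rotate (c' * t) a') (rotate (c' * t) mu')}.Countable := by
  have hc₂ : 2 * c ≠ 2 * c' := by simpa using hc
  refine ((Set.countable_iUnion fun s => Set.countable_iUnion fun u =>
    ((countable_setOf_exp_mul_eq hc₂ (pow_ne_zero 2 (ha s)) (a' u ^ 2)).union
      (countable_setOf_exp_mul_eq hc₂ (pow_ne_zero 2 (ha s)) (-(a' u ^ 2)))).union
      (countable_setOf_exp_mul_eq hc₂.symm (pow_ne_zero 2 (ha' u)) (-(a s ^ 2)))).union
    (Set.countable_iUnion fun s => Set.countable_iUnion fun u =>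
      countable_setOf_exp_mul_eq hc (hmu s) (mu' u))).mono fun t ht => ?_
  simp only [ParamsApart, rotate_apply_sq, not_and_or, not_forall, not_not,
    Set.mem_ofPred_eq] at ht
  simp only [Set.mem_union, Set.mem_iUnion, Set.mem_ofPred_eq, mul_neg, mul_assoc]
  rcases ht with ⟨s, u, h⟩ | ⟨s, u, h⟩
  exacts [Or.inl ⟨s, u, or_assoc.2 h⟩, Or.inr ⟨s, u, h⟩]

section Continuity

variable {X : Type*} [TopologicalSpace X]

theorem Continuous.dsum {k p : ℕ} {f : X → Matrix (Fin k) (Fin k) ℂ}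
    {g : X → Matrix (Fin p) (Fin p) ℂ} (hf : Continuous f) (hg : Continuous g) :
    Continuous fun x => dsum (f x) (g x) :=
  (hf.matrix_fromBlocks continuous_const continuous_const hg).matrix_reindex _ _

theorem Continuous.finDsum {q : ℕ} (p : Fin q → ℕ)
    {M : X → (i : Fin q) → Matrix (Fin (p i)) (Fin (p i)) ℂ}
    (hM : ∀ i, Continuous fun x => M x i) : Continuous fun x => finDsum p (M x) := by
  induction q with
  | zero => exact continuous_const
  | succ q ih => exact (hM 0).dsum (ih _ fun i => hM i.succ)

theorem continuous_Jblock (k : ℕ) : Continuous (Jblock k) :=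
  continuous_matrix fun i j => by
    simp only [Jblock, of_apply]
    split_ifs <;> fun_prop

theorem continuous_Hblock (k : ℕ) : Continuous (Hblock k) :=
  (continuous_const.matrix_fromBlocks continuous_const (continuous_Jblock k)
    continuous_const).matrix_reindex _ _

theorem StarData.continuous_matWith (d : StarData) {a : X → Fin d.n2 → ℂ}
    {mu : X → Fin d.n3 → ℂ} (ha : Continuous a) (hmu : Continuous mu) :
    Continuous fun x => d.matWith (a x) (mu x) :=
  continuous_const.dsum <|
    (Continuous.finDsum _ fun i => ((continuous_apply i).comp ha).smul continuous_const).dsum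
      (Continuous.finDsum _ fun i => (continuous_Hblock _).comp ((continuous_apply i).comp hmu))

end Continuity

theorem reindex_finDsum_mem_closure_starBundle {q : ℕ} {C : Fin q → StarData}
    {A : (i : Fin q) → Matrix (Fin (C i).size) (Fin (C i).size) ℂ}
    (hA : ∀ i, A i ∈ starBundle (C i))
    (hC : Pairwise fun i j => ParamsApart (C i).a (C i).mu (C j).a (C j).mu) :
    reindex (finCongr (finSize_size_eq_size_appendAll C))
      (finCongr (finSize_size_eq_size_appendAll C)) (finDsum (fun i => (C i).size) A) ∈
      closure (starBundle (appendAll C)) := by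
  choose a mu P hP hOK hAeq using hA
  let F : ℝ → Matrix (Fin (appendAll C).size) (Fin (appendAll C).size) ℂ := fun t =>
    reindex (finCongr (finSize_size_eq_size_appendAll C))
      (finCongr (finSize_size_eq_size_appendAll C)) (finDsum (fun i => (C i).size) fun i =>
        P i * (C i).matWith (rotate (i * t) (a i)) (rotate (i * t) (mu i)) * (P i)ᴴ)
  let bad : Set ℝ := ⋃ (i : Fin q) (j : Fin q) (_ : i ≠ j), {t : ℝ | ¬ParamsApart
    (rotate (i * t) (a i)) (rotate (i * t) (mu i)) (rotate (j * t) (a j)) (rotate (j * t) (mu j))}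
  have hF : Continuous F :=
    (Continuous.finDsum _ fun i => (continuous_const.matrix_mul ((C i).continuous_matWith
      (continuous_rotate_mul _ _) (continuous_rotate_mul _ _))).matrix_mul
        continuous_const).matrix_reindex _ _
  have hF₀ : F 0 = reindex (finCongr (finSize_size_eq_size_appendAll C))
      (finCongr (finSize_size_eq_size_appendAll C)) (finDsum (fun i => (C i).size) A) := by
    simp only [F, mul_zero, rotate_zero, ← hAeq]
  have hbad : bad.Countable := by
    refine Set.countable_iUnion fun i => Set.countable_iUnion fun j =>
      Set.countable_iUnion fun hij => countable_setOf_not_paramsApart_rotate ?_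
        (fun s => norm_ne_zero_iff.1 (by simp [(hOK i).1 s]))
        (fun s => norm_ne_zero_iff.1 (by simp [(hOK j).1 s]))
        (fun s => norm_pos_iff.1 (one_pos.trans ((hOK i).2.1 s)))
    exact_mod_cast Fin.val_injective.ne hij
  have hFB : Set.MapsTo F badᶜ (starBundle (appendAll C)) := fun t ht =>
    reindex_finDsum_mem_starBundle (fun i => (hOK i).rotate _)
      (fun i => .of_isUnit (hP i) _)
      (fun i j hij => not_not.1 fun h => ht (Set.mem_iUnion₂.2 ⟨i, j, Set.mem_iUnion.2 ⟨hij, h⟩⟩))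
      hC
  rw [← hF₀]
  exact map_mem_closure hF ((hbad.dense_compl ℝ).closure_eq ▸ Set.mem_univ 0) hFB

theorem dsum_mem_closure_starBundle_of_mem_general (q : ℕ) (C : Fin q → StarData)
    (A : (i : Fin q) → Matrix (Fin (C i).size) (Fin (C i).size) ℂ)
    (hA : ∀ i, A i ∈ starBundle (C i))
    (hdisj1 : ∀ i j, i ≠ j → (C i).SG2 ∩ (C j).SG2 = ∅)
    (hdisj2 : ∀ i j, i ≠ j → (C i).SG2 ∩ (C j).SG2neg = ∅)
    (hdisj3 : ∀ i j, i ≠ j → (C i).SH ∩ (C j).SH = ∅) :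
    (∃ hsz : finSize (fun i => (C i).size) = (appendAll C).size,
      Matrix.reindex (finCongr hsz) (finCongr hsz) (finDsum (fun i => (C i).size) A) ∈
        closure (starBundle (appendAll C))) ∧
    ∀ (a : (i : Fin q) → Fin (C i).n2 → ℂ) (mu : (i : Fin q) → Fin (C i).n3 → ℂ),
      (∀ i, (C i).ParamsOK (a i) (mu i)) →
      (∀ i, ∃ P : Matrix (Fin (C i).size) (Fin (C i).size) ℂ,
        IsUnit P ∧ A i = P * (C i).matWith (a i) (mu i) * Pᴴ) →
      (∀ i j, i ≠ j →
        Set.range (fun t => a i t ^ 2) ∩ Set.range (fun t => a j t ^ 2) = ∅) →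
      (∀ i j, i ≠ j →
        Set.range (fun t => a i t ^ 2) ∩ Set.range (fun t => -(a j t ^ 2)) = ∅) →
      (∀ i j, i ≠ j → Set.range (mu i) ∩ Set.range (mu j) = ∅) →
      ∃ hsz : finSize (fun i => (C i).size) = (appendAll C).size,
        Matrix.reindex (finCongr hsz) (finCongr hsz) (finDsum (fun i => (C i).size) A) ∈
          starBundle (appendAll C) := by
  have hCapart : Pairwise fun i j => ParamsApart (C i).a (C i).mu (C j).a (C j).mu :=
    fun i j hij => paramsApart_of_inter_eq_empty (hdisj1 i j hij) (hdisj2 i j hij)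
      (hdisj2 j i hij.symm) (hdisj3 i j hij)
  refine ⟨⟨finSize_size_eq_size_appendAll C,
      reindex_finDsum_mem_closure_starBundle hA hCapart⟩,
    fun a mu hOK hP h₁ h₂ h₃ => ⟨finSize_size_eq_size_appendAll C, ?_⟩⟩
  choose P hP hAeq using hP
  exact reindex_finDsum_mem_starBundle hOK (fun i => hAeq i ▸ .of_isUnit (hP i) _)
    (fun i j hij => paramsApart_of_inter_eq_empty (h₁ i j hij) (h₂ i j hij) (h₂ j i hij.symm)
      (h₃ i j hij)) hCapart

/-- **Lemma 3.4.**  If `A_i ∈ ℬ*(C_i)` and the parameter sets of the `C_i` satisfy the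
disjointness conditions, then `A_1 ⊕ ⋯ ⊕ A_q` belongs to the closure of
`ℬ*(C_1 ⊕ ⋯ ⊕ C_q)`; moreover, if the `A_i` are given by canonical matrices whose
parameters also satisfy the disjointness conditions, then
`A_1 ⊕ ⋯ ⊕ A_q ∈ ℬ*(C_1 ⊕ ⋯ ⊕ C_q)`. -/
theorem dsum_mem_closure_starBundle_of_mem (q : ℕ) (C : Fin q → StarData)
    (hC : ∀ i, (C i).Valid)
    (A : (i : Fin q) → Matrix (Fin (C i).size) (Fin (C i).size) ℂ)
    (hA : ∀ i, A i ∈ starBundle (C i))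
    (hdisj1 : ∀ i j, i ≠ j → (C i).SG2 ∩ (C j).SG2 = ∅)
    (hdisj2 : ∀ i j, i ≠ j → (C i).SG2 ∩ (C j).SG2neg = ∅)
    (hdisj3 : ∀ i j, i ≠ j → (C i).SH ∩ (C j).SH = ∅) :
    (∃ hsz : finSize (fun i => (C i).size) = (appendAll C).size,
      Matrix.reindex (finCongr hsz) (finCongr hsz) (finDsum (fun i => (C i).size) A) ∈
        closure (starBundle (appendAll C))) ∧
    ∀ (a : (i : Fin q) → Fin (C i).n2 → ℂ) (mu : (i : Fin q) → Fin (C i).n3 → ℂ),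
      (∀ i, (C i).ParamsOK (a i) (mu i)) →
      (∀ i, ∃ P : Matrix (Fin (C i).size) (Fin (C i).size) ℂ,
        IsUnit P ∧ A i = P * (C i).matWith (a i) (mu i) * Pᴴ) →
      (∀ i j, i ≠ j →
        Set.range (fun t => a i t ^ 2) ∩ Set.range (fun t => a j t ^ 2) = ∅) →
      (∀ i j, i ≠ j →
        Set.range (fun t => a i t ^ 2) ∩ Set.range (fun t => -(a j t ^ 2)) = ∅) →
      (∀ i j, i ≠ j → Set.range (mu i) ∩ Set.range (mu j) = ∅) →
      ∃ hsz : finSize (fun i => (C i).size) = (appendAll C).size,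
        Matrix.reindex (finCongr hsz) (finCongr hsz) (finDsum (fun i => (C i).size) A) ∈
          starBundle (appendAll C) :=
  dsum_mem_closure_starBundle_of_mem_general q C A hA hdisj1 hdisj2 hdisj3
end
end

section
/- (Lemma 3.8(i), congruence case.) Let k > 1. If k is even, then Γ_k belongs to the closure of the set { P (H_2(μ̃_1) ⊕ ⋯ ⊕ H_2(μ̃_{k/2})) Pᵀ : P ∈ ℂ^{k×k} invertible, each μ̃_i satisfies |μ̃_i| > 1 or μ̃_i = e^{iθ} with 0 < θ < π, and μ̃_i ≠ μ̃_{i'} for i ≠ i' }. If k is odd, then Γ_k belongs to the closure of the set { P (H_2(μ̃_1) ⊕ ⋯ ⊕ H_2(μ̃_{⌊k/2⌋}) ⊕ [1]) Pᵀ : P ∈ ℂ^{k×k} invertible, each μ̃_i satisfies |μ̃_i| > 1 or μ̃_i = e^{iθ} with 0 < θ < π, and μ̃_i ≠ μ̃_{i'} for i ≠ i' }. -/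
open Matrix

noncomputable section

/-- The `2 × 2` block `H_2(μ) = [[0, 1], [μ, 0]]`. -/
def H2 (μ : ℂ) : Matrix (Fin 2) (Fin 2) ℂ := !![0, 1; μ, 0]

/-- The block-diagonal direct sum `H_2(μ_1) ⊕ ⋯ ⊕ H_2(μ_r)`. -/
def pairH (r : ℕ) (mu : Fin r → ℂ) :
    Matrix (Fin (finSize fun _ : Fin r => 2)) (Fin (finSize fun _ : Fin r => 2)) ℂ :=
  finDsum (fun _ => 2) fun i => H2 (mu i)

/-- A complex number `μ` is a valid Type II-(a) parameter when `|μ| > 1` or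
`μ = e^(iθ)` with `0 < θ < π`. -/
def TypeIIaParam (μ : ℂ) : Prop :=
  1 < ‖μ‖ ∨ ∃ θ : ℝ, 0 < θ ∧ θ < Real.pi ∧ μ = Complex.exp ((θ : ℂ) * Complex.I)


/-!
Perturb the anti-diagonal of `Γ_k`, multiplying its `i`-th entry by `exp (-ε i)`. The perturbed
matrix `A` is still anti-triangular, so `det (A - λ Aᵀ)` is, up to sign, the product of its
anti-diagonal entries: the cosquare `A⁻ᵀ A` has the `k` eigenvalues `ρ j = ± exp (ε (k - 1 - 2 j))`,
pairwise distinct and coming in reciprocal pairs `ρ j, ρ (k - 1 - j)`. For eigenvectors `v, w` of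
the cosquare with eigenvalues `a, b` one has `vᵀ A w = b · wᵀ A v = a b · vᵀ A w`, so in an
eigenbasis ordered by pairs the Gram matrix of `A` only links reciprocal eigenvalues, and a diagonal
rescaling turns it into `H₂(ρ 0) ⊕ ⋯ ⊕ H₂(ρ (⌊k/2⌋ - 1))`, followed by `[1]` for the
self-reciprocal eigenvalue when `k` is odd; here `|ρ j| > 1` for `j < k / 2`. Letting `ε → 0⁺`
exhibits `Γ_k` as a limit of such matrices.
-/

open Filter Topology

namespace Matrix

section CommRing

variable {R : Type*} [CommRing R] {n : ℕ}

theorem det_eq_sign_mul_prod_antidiag (M : Matrix (Fin n) (Fin n) R)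
    (hM : ∀ i j : Fin n, (i : ℕ) + j < n - 1 → M i j = 0) :
    M.det = Equiv.Perm.sign (Fin.revPerm : Equiv.Perm (Fin n)) * ∏ i, M i i.rev := by
  have hlow : (M.submatrix id Fin.revPerm).IsLowerTriangular := fun i j hij =>
    hM i j.rev (by rw [Fin.val_rev]; have : (i : ℕ) < j := hij; omega)
  have h := det_permute' Fin.revPerm M
  rw [det_of_isLowerTriangular _ hlow] at h
  simp only [submatrix_apply, id, Fin.revPerm_apply] at h
  rw [h, ← mul_assoc, ← Int.cast_mul, ← Units.val_mul, Int.units_mul_self, Units.val_one,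
    Int.cast_one, one_mul]

theorem det_eq_zero_iff_of_antidiag [IsDomain R] (M : Matrix (Fin n) (Fin n) R)
    (hM : ∀ i j : Fin n, (i : ℕ) + j < n - 1 → M i j = 0) :
    M.det = 0 ↔ ∃ i, M i i.rev = 0 := by
  have hsign : ((Equiv.Perm.sign (Fin.revPerm : Equiv.Perm (Fin n)) : ℤ) : R) ≠ 0 :=
    ((Units.isUnit _).map (Int.castRingHom R)).ne_zero
  simp [det_eq_sign_mul_prod_antidiag M hM, hsign, Finset.prod_eq_zero_iff]

end CommRing

section CommSemiring

variable {R ι : Type*} [CommSemiring R] [Fintype ι]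

theorem mul_mul_transpose_apply (M A : Matrix ι ι R) (x y : ι) :
    (M * A * Mᵀ) x y = M x ⬝ᵥ (A *ᵥ M y) := by
  rw [dotProduct_mulVec]
  simp only [mul_apply, transpose_apply, vecMul, dotProduct]

theorem dotProduct_mulVec_of_mulVec_eq_smul {A : Matrix ι ι R} {w : ι → R} {b : R}
    (hw : A *ᵥ w = b • (Aᵀ *ᵥ w)) (v : ι → R) :
    v ⬝ᵥ (A *ᵥ w) = b * (w ⬝ᵥ (A *ᵥ v)) := by
  rw [hw, dotProduct_smul, smul_eq_mul, dotProduct_mulVec, vecMul_transpose, dotProduct_comm]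

end CommSemiring

section Field

variable {K ι : Type*} [Field K] [Fintype ι]

theorem dotProduct_mulVec_eq_zero_of_mul_ne_one {A : Matrix ι ι K} {v w : ι → K} {a b : K}
    (hv : A *ᵥ v = a • (Aᵀ *ᵥ v)) (hw : A *ᵥ w = b • (Aᵀ *ᵥ w)) (hab : a * b ≠ 1) :
    v ⬝ᵥ (A *ᵥ w) = 0 := by
  have h := dotProduct_mulVec_of_mulVec_eq_smul hw v
  rw [dotProduct_mulVec_of_mulVec_eq_smul hv w] at h
  have : (1 - a * b) * (v ⬝ᵥ (A *ᵥ w)) = 0 := by linear_combination h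
  exact (mul_eq_zero.mp this).resolve_left (sub_ne_zero.mpr hab.symm)

theorem linearIndependent_of_mulVec_eq_smul_transpose_mulVec [DecidableEq ι]
    {A : Matrix ι ι K} (hA : IsUnit A) {ν : ι → K} (hν : Function.Injective ν)
    {v : ι → ι → K} (hv0 : ∀ x, v x ≠ 0) (hv : ∀ x, A *ᵥ v x = ν x • (Aᵀ *ᵥ v x)) :
    LinearIndependent K v := by
  have hAT : IsUnit Aᵀ.det := by rw [det_transpose]; exact (isUnit_iff_isUnit_det A).mp hA
  refine Module.End.eigenvectors_linearIndependent' (toLin' (Aᵀ⁻¹ * A)) ν hν v fun x =>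
    Module.End.hasEigenvector_iff.mpr ⟨Module.End.mem_eigenspace_iff.mpr ?_, hv0 x⟩
  rw [toLin'_apply, ← mulVec_mulVec, hv x, mulVec_smul, mulVec_mulVec, nonsing_inv_mul _ hAT,
    one_mulVec]

end Field

end Matrix

def pairPartner (n x : ℕ) : ℕ :=
  if x % 2 = 0 then (if x + 1 < n then x + 1 else x) else x - 1

theorem pairPartner_lt {n x : ℕ} (hx : x < n) : pairPartner n x < n := by
  unfold pairPartner; split_ifs <;> omega

/-- `H₂(μ 0) ⊕ H₂(μ 1) ⊕ ⋯` on the index pairs `{2m, 2m + 1}`, followed by a block `[1]` on the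
last index when `n` is odd. -/
def pairModel {K : Type*} [Zero K] [One K] (n : ℕ) (μ : ℕ → K) : Matrix (Fin n) (Fin n) K :=
  Matrix.of fun x y =>
    if (y : ℕ) = pairPartner n x then (if (x : ℕ) % 2 = 0 then 1 else μ (y / 2)) else 0

section pairModel

variable {K : Type*} [Field K] [IsAlgClosed K] {n : ℕ}

theorem exists_eq_diagonal_mul_pairModel_mul_diagonal (G : Matrix (Fin n) (Fin n) K)
    (hG : G.det ≠ 0) (ν : Fin n → K) (μ : ℕ → K) (hswap : ∀ x y, G x y = ν y * G y x)
    (hν : ∀ x : Fin n, (x : ℕ) % 2 = 0 → ν x = μ (x / 2))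
    (hsupp : ∀ x y : Fin n, (y : ℕ) ≠ pairPartner n x → G x y = 0) :
    ∃ δ : Fin n → K, (∀ x, δ x ≠ 0) ∧
      G = Matrix.diagonal δ * pairModel n μ * Matrix.diagonal δ := by
  have hpartner : ∀ x y : Fin n, (y : ℕ) = pairPartner n x → G x y ≠ 0 := by
    intro x y hy h0
    refine hG (Matrix.det_eq_zero_of_row_eq_zero x fun z => ?_)
    by_cases hz : (z : ℕ) = pairPartner n x
    · rwa [show z = y from Fin.ext (hz.trans hy.symm)]
    · exact hsupp x z hz
  choose γ hγ using fun x => IsAlgClosed.exists_eq_mul_self (G x x)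
  set δ : Fin n → K := fun x =>
    if (x : ℕ) % 2 = 1 then 1 else if h : (x : ℕ) + 1 < n then G x ⟨x + 1, h⟩ else γ x
    with hδ
  refine ⟨δ, fun x => ?_, ?_⟩
  · simp only [hδ]
    split_ifs with hodd hlt
    · exact one_ne_zero
    · exact hpartner _ _ (by simp only [pairPartner]; split_ifs <;> omega)
    · intro h0
      refine hpartner x x (by simp only [pairPartner]; split_ifs <;> omega) ?_
      rw [hγ, h0, mul_zero]
  ext x y
  rw [Matrix.mul_diagonal, Matrix.diagonal_mul]
  by_cases hy : (y : ℕ) = pairPartner n x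
  swap
  · rw [pairModel, Matrix.of_apply, if_neg hy, mul_zero, zero_mul]
    exact hsupp x y hy
  rw [pairModel, Matrix.of_apply, if_pos hy]
  unfold pairPartner at hy
  rcases Nat.mod_two_eq_zero_or_one x with hx | hx
  · by_cases hlt : (x : ℕ) + 1 < n
    · obtain rfl : y = ⟨x + 1, hlt⟩ := Fin.ext (by simpa [hx, hlt] using hy)
      simp [hδ, hx, hlt, Nat.add_mod]
    · obtain rfl : y = x := Fin.ext (by simpa [hx, hlt] using hy)
      simp [hδ, hx, hlt, hγ]
  · rw [if_neg (by omega)] at hy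
    have hy2 : (y : ℕ) % 2 = 0 := by omega
    have hlt : (y : ℕ) + 1 < n := by omega
    have hyx : x = ⟨y + 1, hlt⟩ := Fin.ext (by simp only; omega)
    rw [hswap, hν y hy2]
    simp only [hδ, hx, hy2, one_ne_zero, zero_ne_one, if_false, if_true, dif_pos hlt, ← hyx,
      one_mul]

theorem exists_isUnit_eq_mul_pairModel_mul_transpose_of_eigenbasis
    {A : Matrix (Fin n) (Fin n) K} (hA : IsUnit A) {ν : Fin n → K}
    (hνinj : Function.Injective ν) {v : Fin n → Fin n → K} (hv0 : ∀ x, v x ≠ 0)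
    (hv : ∀ x, A *ᵥ v x = ν x • (Aᵀ *ᵥ v x)) (μ : ℕ → K)
    (hνμ : ∀ x : Fin n, (x : ℕ) % 2 = 0 → ν x = μ (x / 2))
    (hpair : ∀ x y : Fin n, (y : ℕ) = pairPartner n x → ν x * ν y = 1) :
    ∃ P : Matrix (Fin n) (Fin n) K, IsUnit P ∧ A = P * pairModel n μ * Pᵀ := by
  set V : Matrix (Fin n) (Fin n) K := Matrix.of v
  have hV : IsUnit V.det := (Matrix.isUnit_iff_isUnit_det V).mp <|
    Matrix.linearIndependent_rows_iff_isUnit.mp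
      (Matrix.linearIndependent_of_mulVec_eq_smul_transpose_mulVec hA hνinj hv0 hv)
  have hVT : IsUnit Vᵀ.det := by rwa [Matrix.det_transpose]
  obtain ⟨G, hGdef⟩ : ∃ G, G = V * A * Vᵀ := ⟨_, rfl⟩
  have hGapply : ∀ x y, G x y = v x ⬝ᵥ (A *ᵥ v y) := fun x y => by
    rw [hGdef, Matrix.mul_mul_transpose_apply]; rfl
  have hG : G.det ≠ 0 := by
    rw [hGdef, Matrix.det_mul, Matrix.det_mul]
    exact ((hV.mul ((Matrix.isUnit_iff_isUnit_det A).mp hA)).mul hVT).ne_zero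
  have hsupp : ∀ x y : Fin n, (y : ℕ) ≠ pairPartner n x → G x y = 0 := by
    intro x y hy
    rw [hGapply]
    refine Matrix.dotProduct_mulVec_eq_zero_of_mul_ne_one (hv x) (hv y) fun h => hy ?_
    have hz := hpair x ⟨pairPartner n x, pairPartner_lt x.isLt⟩ rfl
    rw [hνinj (mul_left_cancel₀ (left_ne_zero_of_mul_eq_one hz) (h.trans hz.symm))]
  obtain ⟨δ, hδ, hGδ⟩ := exists_eq_diagonal_mul_pairModel_mul_diagonal G hG ν μ
    (fun x y => by rw [hGapply, hGapply, Matrix.dotProduct_mulVec_of_mulVec_eq_smul (hv y)])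
    hνμ hsupp
  refine ⟨V⁻¹ * Matrix.diagonal δ, ?_, ?_⟩
  · rw [Matrix.isUnit_iff_isUnit_det, Matrix.det_mul, Matrix.det_diagonal]
    exact (Matrix.isUnit_nonsing_inv_det V hV).mul
      (Finset.prod_ne_zero_iff.mpr fun x _ => hδ x).isUnit
  have hAG : A = V⁻¹ * G * (V⁻¹)ᵀ := by
    rw [Matrix.transpose_nonsing_inv, hGdef, Matrix.mul_assoc V,
      Matrix.nonsing_inv_mul_cancel_left _ _ hV, Matrix.mul_nonsing_inv_cancel_right _ _ hVT]
  rw [hAG, hGδ, Matrix.transpose_mul, Matrix.diagonal_transpose]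
  simp only [Matrix.mul_assoc]

/-- The anti-diagonal index whose eigenvalue is placed at position `x` of the eigenbasis:
`j` at `2 j` and its reciprocal partner `n - 1 - j` at `2 j + 1`. -/
def pairOrder (n x : ℕ) : ℕ :=
  if x % 2 = 0 then x / 2 else n - 1 - x / 2

theorem pairOrder_lt {x : ℕ} (hx : x < n) : pairOrder n x < n := by
  unfold pairOrder; split_ifs <;> omega

theorem pairOrder_injOn : Set.InjOn (pairOrder n) (Set.Iio n) := by
  intro x hx y hy h
  simp only [Set.mem_Iio] at hx hy
  unfold pairOrder at h; split_ifs at h <;> omega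

theorem pairOrder_pairPartner {x : ℕ} (hx : x < n) :
    pairOrder n (pairPartner n x) = n - 1 - pairOrder n x := by
  unfold pairOrder pairPartner; split_ifs <;> omega

theorem exists_isUnit_eq_mul_pairModel_mul_transpose (A : Matrix (Fin n) (Fin n) K)
    (hA : ∀ i j : Fin n, (i : ℕ) + j < n - 1 → A i j = 0) (hdiag : ∀ i : Fin n, A i i.rev ≠ 0)
    (ρ : ℕ → K) (hρ : ∀ i : Fin n, A i i.rev = ρ i * A i.rev i)
    (hρinj : Set.InjOn ρ (Set.Iio n)) :
    ∃ P : Matrix (Fin n) (Fin n) K, IsUnit P ∧ A = P * pairModel n ρ * Pᵀ := by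
  have hAunit : IsUnit A := (Matrix.isUnit_iff_isUnit_det A).mpr <| isUnit_iff_ne_zero.mpr
    fun h => by
      obtain ⟨i, hi⟩ := (Matrix.det_eq_zero_iff_of_antidiag A hA).mp h
      exact hdiag i hi
  have hrecip : ∀ i : Fin n, ρ i * ρ i.rev = 1 := fun i => by
    have h := hρ i
    have h' := hρ i.rev
    rw [Fin.rev_rev] at h'
    rw [h', ← mul_assoc] at h
    exact (mul_eq_right₀ (hdiag i)).mp h.symm
  set ν : Fin n → K := fun x => ρ (pairOrder n x)
  have heig : ∀ x, ∃ v ≠ 0, A *ᵥ v = ν x • (Aᵀ *ᵥ v) := by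
    intro x
    obtain ⟨v, hv0, hv⟩ := Matrix.exists_mulVec_eq_zero_iff.mpr <|
      (Matrix.det_eq_zero_iff_of_antidiag (A - ν x • Aᵀ) fun i j hij => by
        simp [hA i j hij, hA j i (by omega)]).mpr
        ⟨⟨pairOrder n x, pairOrder_lt x.isLt⟩, by simp [ν, hρ]⟩
    refine ⟨v, hv0, ?_⟩
    rwa [Matrix.sub_mulVec, Matrix.smul_mulVec, sub_eq_zero] at hv
  choose v hv0 hv using heig
  refine exists_isUnit_eq_mul_pairModel_mul_transpose_of_eigenbasis hAunit ?_ hv0 hv ρ ?_ ?_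
  · intro x y h
    exact Fin.ext <| pairOrder_injOn x.isLt y.isLt <|
      hρinj (pairOrder_lt x.isLt) (pairOrder_lt y.isLt) h
  · intro x hx
    simp [ν, pairOrder, hx]
  · intro x y hy
    have := hrecip ⟨pairOrder n x, pairOrder_lt x.isLt⟩
    simp only [ν, hy, pairOrder_pairPartner x.isLt]
    simpa [Fin.rev, Nat.sub_sub, Nat.add_comm 1] using this

end pairModel

section dsum

variable {m n : ℕ} (A : Matrix (Fin m) (Fin m) ℂ) (B : Matrix (Fin n) (Fin n) ℂ)

theorem dsum_castAdd_castAdd (i j : Fin m) :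
    dsum A B (Fin.castAdd n i) (Fin.castAdd n j) = A i j := by simp [dsum]

theorem dsum_castAdd_natAdd (i : Fin m) (j : Fin n) :
    dsum A B (Fin.castAdd n i) (Fin.natAdd m j) = 0 := by simp [dsum]

theorem dsum_natAdd_castAdd (i : Fin n) (j : Fin m) :
    dsum A B (Fin.natAdd m i) (Fin.castAdd n j) = 0 := by simp [dsum]

theorem dsum_natAdd_natAdd (i j : Fin n) :
    dsum A B (Fin.natAdd m i) (Fin.natAdd m j) = B i j := by simp [dsum]

end dsum

theorem dsum_H2_pairModel {m : ℕ} (μ : ℕ → ℂ) :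
    dsum (H2 (μ 0)) (pairModel m fun j => μ (j + 1)) = pairModel (2 + m) μ := by
  ext x y
  refine Fin.addCases (fun i => ?_) (fun i => ?_) x <;>
    refine Fin.addCases (fun j => ?_) (fun j => ?_) y <;>
    simp only [dsum_castAdd_castAdd, dsum_castAdd_natAdd, dsum_natAdd_castAdd, dsum_natAdd_natAdd,
      pairModel, pairPartner, Matrix.of_apply, Fin.val_castAdd, Fin.val_natAdd]
  · fin_cases i <;> fin_cases j <;> simp [H2, show 1 < 2 + m by omega]
  all_goals split_ifs <;> first | rfl | omega | (congr 1; omega)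

theorem dsum_pairModel_one {m : ℕ} (hm : m % 2 = 0) (μ : ℕ → ℂ) :
    dsum (pairModel m μ) !![1] = pairModel (m + 1) μ := by
  ext x y
  refine Fin.addCases (fun i => ?_) (fun i => ?_) x <;>
    refine Fin.addCases (fun j => ?_) (fun j => ?_) y <;>
    simp only [dsum_castAdd_castAdd, dsum_castAdd_natAdd, dsum_natAdd_castAdd, dsum_natAdd_natAdd,
      pairModel, pairPartner, Matrix.of_apply, Fin.val_castAdd, Fin.val_natAdd, Fin.val_eq_zero,
      Matrix.cons_val', Matrix.cons_val_fin_one]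
  all_goals split_ifs <;> first | rfl | omega

theorem pairH_eq_pairModel (r : ℕ) (μ : ℕ → ℂ) :
    pairH r (fun i => μ i) = pairModel (finSize fun _ : Fin r => 2) μ := by
  induction r generalizing μ with
  | zero => ext x; exact x.elim0
  | succ r ih =>
    change dsum (H2 (μ 0)) (pairH r fun i => μ (i + 1)) = _
    rw [ih fun j => μ (j + 1)]
    exact dsum_H2_pairModel μ

theorem finSize_const_two (r : ℕ) : finSize (fun _ : Fin r => 2) = 2 * r := by
  induction r with
  | zero => rfl
  | succ r ih => rw [finSize, ih]; ring

theorem reindex_finCongr_pairModel {K : Type*} [Zero K] [One K] {m n : ℕ} (h : m = n)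
    (μ : ℕ → K) : Matrix.reindex (finCongr h) (finCongr h) (pairModel m μ) = pairModel n μ := by
  subst h; rfl

def perturbedGamma (k : ℕ) (ε : ℝ) : Matrix (Fin k) (Fin k) ℂ :=
  Matrix.of fun i j =>
    Gamma k i j * if (i : ℕ) + j = k - 1 then (Real.exp (-(ε * i)) : ℂ) else 1

def perturbedGammaRatio (k : ℕ) (ε : ℝ) (j : ℕ) : ℂ :=
  (-1) ^ (k - 1) * (Real.exp (ε * (k - 1 - 2 * j)) : ℂ)

section perturbedGamma

variable {k : ℕ}

theorem continuous_perturbedGamma : Continuous (perturbedGamma k) := by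
  refine continuous_pi fun i => continuous_pi fun j => ?_
  simp only [perturbedGamma, Matrix.of_apply]
  split_ifs <;> fun_prop

theorem perturbedGamma_zero : perturbedGamma k 0 = Gamma k := by
  ext i j
  simp [perturbedGamma]

theorem perturbedGamma_eq_zero (ε : ℝ) {i j : Fin k} (hij : (i : ℕ) + j < k - 1) :
    perturbedGamma k ε i j = 0 := by
  simp only [perturbedGamma, Gamma, Matrix.of_apply]
  rw [if_neg (by omega), zero_mul]

theorem perturbedGamma_apply_rev (ε : ℝ) (i : Fin k) :
    perturbedGamma k ε i i.rev = (-1) ^ (k - 1 - (i : ℕ)) * (Real.exp (-(ε * i)) : ℂ) := by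
  have : (i : ℕ) + i.rev = k - 1 := by rw [Fin.val_rev]; omega
  simp only [perturbedGamma, Gamma, Matrix.of_apply, if_pos this, if_pos (Or.inl this)]

theorem perturbedGamma_apply_rev_eq_ratio_mul (ε : ℝ) (i : Fin k) :
    perturbedGamma k ε i i.rev = perturbedGammaRatio k ε i * perturbedGamma k ε i.rev i := by
  have hrev : ((i.rev : ℕ) : ℝ) + i + 1 = k := by
    exact_mod_cast (by rw [Fin.val_rev]; omega : (i.rev : ℕ) + i + 1 = k)
  have hexp : Real.exp (-(ε * i)) =
      Real.exp (ε * (k - 1 - 2 * i)) * Real.exp (-(ε * i.rev)) := by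
    rw [← Real.exp_add]; congr 1; linear_combination ε * hrev
  have hsign : (-1 : ℂ) ^ (k - 1) = (-1) ^ (k - 1 - (i : ℕ)) * (-1) ^ (i : ℕ) := by
    rw [← pow_add]; congr 1; omega
  have hsq : (-1 : ℂ) ^ (i : ℕ) * (-1) ^ (i : ℕ) = 1 := by
    rw [← pow_add, ← two_mul, pow_mul, neg_one_sq, one_pow]
  have h := perturbedGamma_apply_rev ε i.rev
  rw [Fin.rev_rev, show k - 1 - (i.rev : ℕ) = i by rw [Fin.val_rev]; omega] at h
  rw [h, perturbedGamma_apply_rev, perturbedGammaRatio, hexp, Complex.ofReal_mul, hsign]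
  linear_combination (-((-1 : ℂ) ^ (k - 1 - (i : ℕ)) * (Real.exp (ε * (k - 1 - 2 * i)) : ℂ) *
    (Real.exp (-(ε * i.rev)) : ℂ))) * hsq

theorem norm_perturbedGammaRatio (ε : ℝ) (j : ℕ) :
    ‖perturbedGammaRatio k ε j‖ = Real.exp (ε * (k - 1 - 2 * j)) := by
  rw [perturbedGammaRatio, norm_mul, norm_pow, norm_neg, norm_one, one_pow, one_mul,
    Complex.norm_real, Real.norm_of_nonneg (Real.exp_pos _).le]

theorem perturbedGammaRatio_injective {ε : ℝ} (hε : ε ≠ 0) :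
    Function.Injective (perturbedGammaRatio k ε) := by
  intro j j' h
  have := congrArg norm h
  simp only [norm_perturbedGammaRatio, Real.exp_eq_exp, mul_right_inj' hε] at this
  exact_mod_cast (by linarith : (j : ℝ) = j')

theorem one_lt_norm_perturbedGammaRatio {ε : ℝ} (hε : 0 < ε) {j : ℕ} (hj : j < k / 2) :
    1 < ‖perturbedGammaRatio k ε j‖ := by
  rw [norm_perturbedGammaRatio, Real.one_lt_exp_iff]
  have : (2 * j + 1 : ℝ) < k := by exact_mod_cast (by omega : 2 * j + 1 < k)
  nlinarith

theorem exists_isUnit_perturbedGamma_eq {ε : ℝ} (hε : ε ≠ 0) :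
    ∃ P : Matrix (Fin k) (Fin k) ℂ, IsUnit P ∧
      perturbedGamma k ε = P * pairModel k (perturbedGammaRatio k ε) * Pᵀ :=
  exists_isUnit_eq_mul_pairModel_mul_transpose _ (fun _ _ => perturbedGamma_eq_zero ε)
    (fun i => by
      rw [perturbedGamma_apply_rev]
      exact mul_ne_zero (pow_ne_zero _ (by norm_num)) (by exact_mod_cast (Real.exp_pos _).ne'))
    _ (perturbedGamma_apply_rev_eq_ratio_mul ε) (perturbedGammaRatio_injective hε).injOn

end perturbedGamma

theorem Gamma_mem_closure_congBundle_general (k : ℕ) :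
    (Even k →
      ∃ h : finSize (fun _ : Fin (k / 2) => 2) = k,
        Gamma k ∈
          closure {A : Matrix (Fin k) (Fin k) ℂ |
            ∃ (mu : Fin (k / 2) → ℂ) (P : Matrix (Fin k) (Fin k) ℂ),
              IsUnit P ∧ (∀ i, TypeIIaParam (mu i)) ∧
              (∀ i i', i ≠ i' → mu i ≠ mu i') ∧
              A = P * Matrix.reindex (finCongr h) (finCongr h) (pairH (k / 2) mu) * Pᵀ}) ∧
    (Odd k →
      ∃ h : finSize (fun _ : Fin (k / 2) => 2) + 1 = k,
        Gamma k ∈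
          closure {A : Matrix (Fin k) (Fin k) ℂ |
            ∃ (mu : Fin (k / 2) → ℂ) (P : Matrix (Fin k) (Fin k) ℂ),
              IsUnit P ∧ (∀ i, TypeIIaParam (mu i)) ∧
              (∀ i i', i ≠ i' → mu i ≠ mu i') ∧
              A = P * Matrix.reindex (finCongr h) (finCongr h)
                    (dsum (pairH (k / 2) mu) !![(1 : ℂ)]) * Pᵀ}) := by
  have hlim : Tendsto (perturbedGamma k) (𝓝[>] 0) (𝓝 (Gamma k)) :=
    perturbedGamma_zero ▸ (continuous_perturbedGamma.tendsto 0).mono_left nhdsWithin_le_nhds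
  have hmem : ∀ ε ∈ Set.Ioi (0 : ℝ), ∃ P : Matrix (Fin k) (Fin k) ℂ, IsUnit P ∧
      (∀ i : Fin (k / 2), TypeIIaParam (perturbedGammaRatio k ε i)) ∧
      (∀ i i' : Fin (k / 2), i ≠ i' → perturbedGammaRatio k ε i ≠ perturbedGammaRatio k ε i') ∧
      perturbedGamma k ε = P * pairModel k (perturbedGammaRatio k ε) * Pᵀ := fun ε hε => by
    obtain ⟨P, hP, hA⟩ := exists_isUnit_perturbedGamma_eq (ne_of_gt hε)
    exact ⟨P, hP, fun i => Or.inl (one_lt_norm_perturbedGammaRatio hε i.isLt),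
      fun i i' hne h => hne (Fin.ext (perturbedGammaRatio_injective (ne_of_gt hε) h)), hA⟩
  have hsize := finSize_const_two (k / 2)
  constructor
  · intro hk
    refine ⟨hsize.trans (Nat.two_mul_div_two_of_even hk),
      mem_closure_of_tendsto hlim (eventually_nhdsWithin_of_forall fun ε hε => ?_)⟩
    obtain ⟨P, hP, hII, hne, hA⟩ := hmem ε hε
    refine ⟨_, P, hP, hII, hne, ?_⟩
    rwa [pairH_eq_pairModel, reindex_finCongr_pairModel]
  · intro hk
    refine ⟨hsize ▸ Nat.two_mul_div_two_add_one_of_odd hk,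
      mem_closure_of_tendsto hlim (eventually_nhdsWithin_of_forall fun ε hε => ?_)⟩
    obtain ⟨P, hP, hII, hne, hA⟩ := hmem ε hε
    refine ⟨_, P, hP, hII, hne, ?_⟩
    rwa [pairH_eq_pairModel, dsum_pairModel_one (by omega), reindex_finCongr_pairModel]

/-- **Lemma 3.8(i), congruence case.**  For `k > 1`, the matrix `Γ_k` belongs to the
closure of the congruence bundle of a direct sum of pairwise distinct `2 × 2`
Type II-(a) blocks (plus one `1 × 1` Type I block when `k` is odd). -/
theorem Gamma_mem_closure_congBundle (k : ℕ) (hk : 1 < k) :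
    (Even k →
      ∃ h : finSize (fun _ : Fin (k / 2) => 2) = k,
        Gamma k ∈
          closure {A : Matrix (Fin k) (Fin k) ℂ |
            ∃ (mu : Fin (k / 2) → ℂ) (P : Matrix (Fin k) (Fin k) ℂ),
              IsUnit P ∧ (∀ i, TypeIIaParam (mu i)) ∧
              (∀ i i', i ≠ i' → mu i ≠ mu i') ∧
              A = P * Matrix.reindex (finCongr h) (finCongr h) (pairH (k / 2) mu) * Pᵀ}) ∧
    (Odd k →
      ∃ h : finSize (fun _ : Fin (k / 2) => 2) + 1 = k,
        Gamma k ∈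
          closure {A : Matrix (Fin k) (Fin k) ℂ |
            ∃ (mu : Fin (k / 2) → ℂ) (P : Matrix (Fin k) (Fin k) ℂ),
              IsUnit P ∧ (∀ i, TypeIIaParam (mu i)) ∧
              (∀ i i', i ≠ i' → mu i ≠ mu i') ∧
              A = P * Matrix.reindex (finCongr h) (finCongr h)
                    (dsum (pairH (k / 2) mu) !![(1 : ℂ)]) * Pᵀ}) :=
  Gamma_mem_closure_congBundle_general k
end
end

section
/- (Lemma 3.8(ii), *congruence case.) Let k ≥ 1 and μ ∈ ℂ with |μ| > 1. Then H_{2k}(μ) belongs to the closure of the set { P (H_2(μ̃_1) ⊕ ⋯ ⊕ H_2(μ̃_k)) Pᴴ : P ∈ ℂ^{2k×2k} invertible, |μ̃_i| > 1 for all i, and μ̃_i ≠ μ̃_{i'} for i ≠ i' }. -/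
open Matrix

noncomputable section

/-! Perturb `J_k(μ)` to the bidiagonal matrix `M = J_k(0) + D`, `D = diag(d_0, …, d_{k-1})`,
`d_i = μ (1 + t i)`, `t > 0`: its eigenvalues are pairwise distinct, of modulus at least `|μ| > 1`,
and `M → J_k(μ)` as `t → 0`. Being upper triangular with distinct diagonal, `M` is
diagonalised, `M S = S D`, by an explicit unitriangular `S`, and then the congruence by
`diag(S⁻ᴴ, S)` carries `[[0, I], [D, 0]]` to `[[0, I], [M, 0]]`. Finally `[[0, I], [D, 0]]` is a
simultaneous row and column permutation of `H_2(d_0) ⊕ ⋯ ⊕ H_2(d_{k-1})`. -/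

def finTwoProdEquivSum (ι : Type*) : Fin 2 × ι ≃ ι ⊕ ι :=
  (finTwoEquiv.prodCongr (Equiv.refl ι)).trans (Equiv.boolProdEquivSum ι)

namespace Matrix

variable {n m R : Type*} [Fintype n] [DecidableEq n] [Fintype m] [DecidableEq m]
  [CommRing R] [StarRing R]

def StarCongr (A B : Matrix n n R) : Prop :=
  ∃ P : Matrix n n R, IsUnit P ∧ A = P * B * Pᴴ

namespace StarCongr

theorem trans {A B C : Matrix n n R} (hAB : StarCongr A B) (hBC : StarCongr B C) :
    StarCongr A C := by
  obtain ⟨P, hP, rfl⟩ := hAB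
  obtain ⟨Q, hQ, rfl⟩ := hBC
  exact ⟨P * Q, hP.mul hQ, by simp only [conjTranspose_mul, Matrix.mul_assoc]⟩

theorem reindex {A B : Matrix n n R} (h : StarCongr A B) (e : n ≃ m) :
    StarCongr (Matrix.reindex e e A) (Matrix.reindex e e B) := by
  obtain ⟨P, hP, rfl⟩ := h
  refine ⟨Matrix.reindex e e P, hP.map (reindexAlgEquiv R R e), ?_⟩
  rw [conjTranspose_reindex]
  simp only [← coe_reindexAlgEquiv R R, map_mul]

end StarCongr

theorem starCongr_submatrix (A : Matrix n n R) (σ : Equiv.Perm n) :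
    StarCongr (A.submatrix σ σ) A := by
  refine ⟨σ.permMatrix R, ?_, ?_⟩
  · rw [isUnit_iff_isUnit_det]
    exact isUnit_det_of_right_inverse (B := σ⁻¹.permMatrix R)
      (by rw [← permMatrix_mul, inv_mul_cancel, permMatrix_one])
  · rw [conjTranspose_permMatrix, PEquiv.toMatrix_toPEquiv_mul, PEquiv.mul_toMatrix_toPEquiv]
    rfl

theorem starCongr_fromBlocks_antidiag {M D S : Matrix n n R} (hS : IsUnit S.det)
    (hMS : M * S = S * D) :
    StarCongr (fromBlocks 0 1 M 0) (fromBlocks 0 1 D 0) := by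
  refine ⟨fromBlocks (S⁻¹)ᴴ 0 0 S, ?_, ?_⟩
  · rw [isUnit_iff_isUnit_det, det_fromBlocks_zero₂₁, det_conjTranspose, det_nonsing_inv]
    exact (hS.ringInverse.star).mul hS
  · have hM : M = S * D * S⁻¹ := by
      rw [← hMS, Matrix.mul_assoc, mul_nonsing_inv _ hS, Matrix.mul_one]
    have hSS : (S⁻¹)ᴴ * Sᴴ = 1 := by
      rw [← conjTranspose_mul, mul_nonsing_inv _ hS, conjTranspose_one]
    simp [fromBlocks_conjTranspose, fromBlocks_multiply, hM, hSS, Matrix.mul_assoc]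

theorem fromBlocks_antidiag_submatrix_eq_blockDiagonal {ι α : Type*} [DecidableEq ι]
    [Zero α] [One α] (d : ι → α) :
    (fromBlocks 0 1 (diagonal d) 0).submatrix (finTwoProdEquivSum ι) (finTwoProdEquivSum ι) =
      blockDiagonal fun i => !![0, 1; d i, 0] := by
  ext ⟨r, i⟩ ⟨s, j⟩
  fin_cases r <;> fin_cases s <;>
    simp [finTwoProdEquivSum, finTwoEquiv, blockDiagonal_apply, one_apply, diagonal_apply]

end Matrix

theorem finSize_const (k c : ℕ) : finSize (fun _ : Fin k => c) = k * c := by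
  induction k with
  | zero => exact (zero_mul c).symm
  | succ k ih => simp only [finSize, ih]; ring

-- `(r, i) ↦ 2 i + r`, row `r` of the `i`-th diagonal block.
def pairIdx (k : ℕ) : Fin 2 × Fin k ≃ Fin (finSize fun _ : Fin k => 2) :=
  (Equiv.prodComm _ _).trans (finProdFinEquiv.trans (finCongr (finSize_const k 2).symm))

theorem pairIdx_zero (k : ℕ) (r : Fin 2) :
    pairIdx (k + 1) (r, 0) = Fin.castAdd (finSize fun _ : Fin k => 2) r := by
  ext; simp [pairIdx]

theorem pairIdx_succ (k : ℕ) (r : Fin 2) (i : Fin k) :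
    pairIdx (k + 1) (r, i.succ) = Fin.natAdd 2 (pairIdx k (r, i)) := by
  ext
  simp only [pairIdx, Equiv.trans_apply, Equiv.prodComm_apply, Prod.swap_prod_mk, finCongr_apply,
    Fin.val_cast, finProdFinEquiv_apply_val, Fin.val_succ, Fin.val_natAdd]
  ring

theorem pairH_submatrix_pairIdx (k : ℕ) (mu : Fin k → ℂ) :
    (pairH k mu).submatrix (pairIdx k) (pairIdx k) = blockDiagonal fun i => H2 (mu i) := by
  induction k with
  | zero => ext ⟨_, i⟩; exact i.elim0
  | succ k ih =>
    ext ⟨r, i⟩ ⟨s, j⟩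
    have hsplit : pairH (k + 1) mu = dsum (H2 (mu 0)) (pairH k fun i => mu i.succ) := rfl
    rw [submatrix_apply, hsplit]
    induction i using Fin.cases <;> induction j using Fin.cases <;>
      simp only [pairIdx_zero, pairIdx_succ, dsum, reindex_apply, submatrix_apply,
        finSumFinEquiv_symm_apply_castAdd, finSumFinEquiv_symm_apply_natAdd, fromBlocks_apply₁₁,
        fromBlocks_apply₁₂, fromBlocks_apply₂₁, fromBlocks_apply₂₂, blockDiagonal_apply,
        Matrix.zero_apply, Fin.succ_inj, (Fin.succ_ne_zero _).symm, Fin.succ_ne_zero, if_true,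
        if_false]
    exact congr_fun₂ (ih fun i => mu i.succ) (r, _) (s, _)

theorem starCongr_fromBlocks_diagonal_pairH (k : ℕ) (mu : Fin k → ℂ)
    (h : finSize (fun _ : Fin k => 2) = k + k) :
    StarCongr (reindex finSumFinEquiv finSumFinEquiv (fromBlocks 0 1 (diagonal mu) 0))
      (reindex (finCongr h) (finCongr h) (pairH k mu)) := by
  set e := finTwoProdEquivSum (Fin k)
  have hentry : ∀ a b, fromBlocks 0 1 (diagonal mu) 0 a b =
      pairH k mu (pairIdx k (e.symm a)) (pairIdx k (e.symm b)) := fun a b => by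
    simpa [e] using (congr_fun₂ (fromBlocks_antidiag_submatrix_eq_blockDiagonal mu) (e.symm a)
      (e.symm b)).trans (congr_fun₂ (pairH_submatrix_pairIdx k mu) _ _).symm
  set σ : Equiv.Perm (Fin (k + k)) :=
    finSumFinEquiv.symm.trans (e.symm.trans ((pairIdx k).trans (finCongr h)))
  convert starCongr_submatrix (reindex (finCongr h) (finCongr h) (pairH k mu)) σ using 1
  ext a b
  simp [σ, hentry]

-- Column `j` is the eigenvector for `d j`: its entries satisfy `x (i + 1) = (d j - d i) * x i`.
def bidiagEigenvectors (d : ℕ → ℂ) (k : ℕ) : Matrix (Fin k) (Fin k) ℂ :=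
  of fun i j => if (i : ℕ) ≤ j then ∏ l ∈ Finset.Ico (i : ℕ) j, (d j - d l)⁻¹ else 0

theorem det_bidiagEigenvectors (d : ℕ → ℂ) (k : ℕ) : (bidiagEigenvectors d k).det = 1 := by
  rw [det_of_isUpperTriangular]
  · simp [bidiagEigenvectors]
  · intro i j hji
    simp only [bidiagEigenvectors, of_apply, if_neg (not_le.2 (show (j : ℕ) < i from hji))]

theorem bidiagEigenvectors_succ_apply {d : ℕ → ℂ} (hd : Function.Injective d) {k : ℕ}
    (i j : Fin k) (hi : (i : ℕ) + 1 < k) :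
    bidiagEigenvectors d k ⟨i + 1, hi⟩ j = (d j - d i) * bidiagEigenvectors d k i j := by
  rcases lt_trichotomy (i : ℕ) j with hij | hij | hij
  · simp only [bidiagEigenvectors, of_apply, if_pos hij.le, if_pos (Nat.succ_le_of_lt hij),
      Finset.prod_eq_prod_Ico_succ_bot hij]
    rw [← mul_assoc, mul_inv_cancel₀ (sub_ne_zero.2 (hd.ne hij.ne')), one_mul]
  · simp only [bidiagEigenvectors, of_apply, hij, sub_self, zero_mul]
    exact if_neg (Nat.not_succ_le_self _)
  · simp only [bidiagEigenvectors, of_apply, if_neg (not_le.2 hij),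
      if_neg (not_le.2 (hij.trans (Nat.lt_succ_self _))), mul_zero]

theorem Jblock_zero_apply (k : ℕ) (i j : Fin k) :
    Jblock k 0 i j = if (j : ℕ) = i + 1 then 1 else 0 := by
  simp only [Jblock, of_apply]
  split_ifs <;> first | rfl | omega

theorem Jblock_zero_add_diagonal_const (k : ℕ) (μ : ℂ) :
    Jblock k 0 + diagonal (fun _ => μ) = Jblock k μ := by
  ext i j
  rcases eq_or_ne i j with rfl | hij
  · simp [Jblock]
  · simp [Jblock, hij, Fin.val_ne_of_ne hij.symm]

theorem Jblock_zero_mul_apply {k : ℕ} (A : Matrix (Fin k) (Fin k) ℂ) (i j : Fin k) :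
    (Jblock k 0 * A) i j = if h : (i : ℕ) + 1 < k then A ⟨i + 1, h⟩ j else 0 := by
  rw [mul_apply]
  split_ifs with h
  · rw [Finset.sum_eq_single ⟨i + 1, h⟩]
    · rw [Jblock_zero_apply, if_pos rfl, one_mul]
    · intro x _ hx
      rw [Jblock_zero_apply, if_neg (fun hx' => hx (Fin.ext hx')), zero_mul]
    · simp
  · refine Finset.sum_eq_zero fun x _ => ?_
    rw [Jblock_zero_apply, if_neg (by omega), zero_mul]

theorem Jblock_zero_add_diagonal_mul_bidiagEigenvectors {d : ℕ → ℂ} (hd : Function.Injective d)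
    (k : ℕ) :
    (Jblock k 0 + diagonal fun i : Fin k => d i) * bidiagEigenvectors d k =
      bidiagEigenvectors d k * diagonal fun i : Fin k => d i := by
  ext i j
  rw [Matrix.add_mul, Matrix.add_apply, Jblock_zero_mul_apply, diagonal_mul, mul_diagonal]
  split_ifs with hi
  · rw [bidiagEigenvectors_succ_apply hd i j hi]
    ring
  · rcases eq_or_ne i j with rfl | hij
    · ring
    · have hji : ¬ (i : ℕ) ≤ j := by
        have := j.isLt
        omega
      simp only [bidiagEigenvectors, of_apply, if_neg hji, zero_add, mul_zero, zero_mul]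

theorem starCongr_fromBlocks_bidiag_pairH {d : ℕ → ℂ} (hd : Function.Injective d) (k : ℕ)
    (h : finSize (fun _ : Fin k => 2) = k + k) :
    StarCongr (reindex finSumFinEquiv finSumFinEquiv
        (fromBlocks 0 1 (Jblock k 0 + diagonal fun i : Fin k => d i) 0))
      (reindex (finCongr h) (finCongr h) (pairH k fun i => d i)) :=
  ((starCongr_fromBlocks_antidiag (by rw [det_bidiagEigenvectors]; exact isUnit_one)
      (Jblock_zero_add_diagonal_mul_bidiagEigenvectors hd k)).reindex finSumFinEquiv).trans
    (starCongr_fromBlocks_diagonal_pairH k _ h)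

theorem one_lt_norm_mul_one_add_mul {μ : ℂ} (hμ : 1 < ‖μ‖) {t : ℝ} (ht : 0 ≤ t) (n : ℕ) :
    1 < ‖μ * (1 + t * n)‖ := by
  have hnorm : ‖(1 : ℂ) + t * n‖ = 1 + t * n := by
    exact_mod_cast Complex.norm_of_nonneg (by positivity : (0 : ℝ) ≤ 1 + t * n)
  rw [norm_mul, hnorm]
  nlinarith [mul_nonneg ht n.cast_nonneg]

theorem injective_mul_one_add_mul {μ : ℂ} (hμ : μ ≠ 0) {t : ℝ} (ht : t ≠ 0) :
    Function.Injective fun n : ℕ => μ * (1 + t * n) := fun m n hmn => by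
  simpa [hμ, Complex.ofReal_ne_zero.2 ht] using hmn

theorem Hblock_mem_closure_starBundle_general (k : ℕ) (μ : ℂ)
    (hμ : 1 < ‖μ‖) :
    ∃ h : finSize (fun _ : Fin k => 2) = k + k,
      Hblock k μ ∈
        closure {A : Matrix (Fin (k + k)) (Fin (k + k)) ℂ |
          ∃ (mu : Fin k → ℂ) (P : Matrix (Fin (k + k)) (Fin (k + k)) ℂ),
            IsUnit P ∧ (∀ i, 1 < ‖mu i‖) ∧
            (∀ i i', i ≠ i' → mu i ≠ mu i') ∧
            A = P * Matrix.reindex (finCongr h) (finCongr h) (pairH k mu) * Pᴴ} := by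
  have h : finSize (fun _ : Fin k => 2) = k + k := by rw [finSize_const]; ring
  refine ⟨h, ?_⟩
  set d : ℝ → ℕ → ℂ := fun t n => μ * (1 + t * n)
  set f : ℝ → Matrix (Fin (k + k)) (Fin (k + k)) ℂ := fun t => reindex finSumFinEquiv
    finSumFinEquiv (fromBlocks 0 1 (Jblock k 0 + diagonal fun i : Fin k => d t i) 0)
  have hf : Continuous f := by fun_prop
  have hf0 : f 0 = Hblock k μ := by
    simp [f, d, Jblock_zero_add_diagonal_const, Hblock]
  have h0 : (0 : ℝ) ∈ closure (Set.Ioi 0) := by simp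
  rw [← hf0]
  refine closure_mono ?_ (hf.continuousWithinAt.mem_closure_image h0)
  rintro _ ⟨t, ht, rfl⟩
  have hinj := injective_mul_one_add_mul (norm_pos_iff.1 (one_pos.trans hμ)) (ne_of_gt ht)
  obtain ⟨P, hP, hfP⟩ := starCongr_fromBlocks_bidiag_pairH hinj k h
  exact ⟨fun i => d t i, P, hP, fun i => one_lt_norm_mul_one_add_mul hμ (le_of_lt ht) i,
    fun i i' hii' => hinj.ne (Fin.val_injective.ne hii'), hfP⟩

/-- **Lemma 3.8(ii), *congruence case.**  For `k ≥ 1` and `|μ| > 1`, the matrix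
`H_{2k}(μ)` belongs to the closure of the *congruence bundle of a direct sum of `k`
pairwise distinct `2 × 2` Type II blocks. -/
theorem Hblock_mem_closure_starBundle (k : ℕ) (hk : 1 ≤ k) (μ : ℂ)
    (hμ : 1 < ‖μ‖) :
    ∃ h : finSize (fun _ : Fin k => 2) = k + k,
      Hblock k μ ∈
        closure {A : Matrix (Fin (k + k)) (Fin (k + k)) ℂ |
          ∃ (mu : Fin k → ℂ) (P : Matrix (Fin (k + k)) (Fin (k + k)) ℂ),
            IsUnit P ∧ (∀ i, 1 < ‖mu i‖) ∧
            (∀ i i', i ≠ i' → mu i ≠ mu i') ∧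
            A = P * Matrix.reindex (finCongr h) (finCongr h) (pairH k mu) * Pᴴ} :=
  Hblock_mem_closure_starBundle_general k μ hμ
end
end

section
/- (Lemma 3.9.) Let A ∈ ℂ^{n×n} be invertible and let ℓ be an integer with 0 ≤ ℓ ≤ ⌊n/2⌋. Fix parameters μ_1, …, μ_ℓ ∈ ℂ with |μ_i| > 1 and α_1, …, α_{n−2ℓ} ∈ ℂ with |α_j| = 1, and suppose A belongs to the closure of the set { P (H_2(μ̃_1) ⊕ ⋯ ⊕ H_2(μ̃_ℓ) ⊕ diag(α̃_1, …, α̃_{n−2ℓ})) Pᴴ : P invertible, |μ̃_i| > 1 for all i, |α̃_j| = 1 for all j, μ̃_i ≠ μ̃_{i'} ⟺ μ_i ≠ μ_{i'} for all i, i', and α̃_j² ≠ α̃_{j'}² ⟺ α_j² ≠ α_{j'}² for all j, j' } (this is the *congruence bundle ℬ*(⊕_{i=1}^ℓ H_2(μ_i) ⊕ ⊕_{j=1}^{n−2ℓ} α_j)). Then the polynomial p_A(λ) = det(A + λ Aᴴ) ∈ ℂ[λ] has at least n − 2ℓ roots of modulus 1, counted with multiplicity. -/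
open Matrix

noncomputable section

/-- The pencil `A + λ Aᴴ`, regarded as a single matrix over `ℂ[λ]`. -/
def starPencil {n : ℕ} (A : Matrix (Fin n) (Fin n) ℂ) :
    Matrix (Fin n) (Fin n) (Polynomial ℂ) :=
  A.map Polynomial.C + (Polynomial.X : Polynomial ℂ) • Aᴴ.map Polynomial.C

/-!
For `B = P D Pᴴ` in the bundle, `det (B + λ Bᴴ) = det P · conj (det P) · det (D + λ Dᴴ)` factors
explicitly, and `n - 2ℓ` of its roots, the `-aⱼ²`, lie on the unit circle. Along a sequence of such
`B` converging to `A` these polynomials converge pointwise to `p_A`, which has exact degree `n`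
since its leading coefficient is `det Aᴴ ≠ 0`. So their coefficients converge, Cauchy's bound keeps
all their roots in a fixed disc, and a subsequence of the root vectors converges. The limit vector
lists the roots of `p_A`, and as the unit circle is closed, `n - 2ℓ` of them have modulus one.
-/

open Polynomial Filter Topology Finset

namespace Polynomial

theorem tendsto_coeff_of_tendsto_eval {K α : Type*} [Field K] [CharZero K] [TopologicalSpace K]
    [IsTopologicalRing K] {l : Filter α} {p : α → K[X]} {q : K[X]} {N : ℕ}
    (hp : ∀ a, (p a).natDegree ≤ N) (hq : q.natDegree ≤ N)
    (h : ∀ z, Tendsto (fun a ↦ (p a).eval z) l (𝓝 (q.eval z))) (m : ℕ) :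
    Tendsto (fun a ↦ (p a).coeff m) l (𝓝 (q.coeff m)) := by
  have hinj : Set.InjOn (Nat.cast : ℕ → K) (range (N + 1)) := Nat.cast_injective.injOn
  have coeff_eq : ∀ r : K[X], r.natDegree ≤ N → r.coeff m =
      ∑ i ∈ range (N + 1), r.eval (i : K) *
        (Lagrange.basis (range (N + 1)) Nat.cast i).coeff m := by
    intro r hr
    have hdeg : r.degree < #(range (N + 1)) := by
      rw [card_range]
      exact degree_le_natDegree.trans_lt (by exact_mod_cast Nat.lt_succ_of_le hr)
    conv_lhs => rw [Lagrange.eq_interpolate hinj hdeg]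
    simp [Lagrange.interpolate_apply, finsetSum_coeff, coeff_C_mul]
  simp only [coeff_eq _ (hp _), coeff_eq q hq]
  exact tendsto_finsetSum _ fun i _ ↦ (h i).mul_const _

theorem tendsto_cauchyBound {K α : Type*} [NormedField K] {l : Filter α} {p : α → K[X]} {q : K[X]}
    (hq : q ≠ 0) (hp : ∀ᶠ a in l, (p a).natDegree = q.natDegree)
    (h : ∀ m, Tendsto (fun a ↦ (p a).coeff m) l (𝓝 (q.coeff m))) :
    Tendsto (fun a ↦ cauchyBound (p a)) l (𝓝 (cauchyBound q)) := by
  have hsup : Tendsto (fun a ↦ (range q.natDegree).sup (‖(p a).coeff ·‖₊)) l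
      (𝓝 ((range q.natDegree).sup (‖q.coeff ·‖₊))) :=
    Tendsto.finset_sup_nhds_apply fun m _ ↦ (h m).nnnorm
  have hlead := (h q.natDegree).nnnorm
  refine ((hsup.div hlead (by simpa using hq)).add_const 1).congr' ?_
  filter_upwards [hp] with a ha
  simp only [cauchyBound, leadingCoeff, ha, Pi.div_apply]

theorem roots_C_mul_prod_X_sub_C {R ι : Type*} [CommRing R] [IsDomain R] [Fintype ι] {c : R}
    (hc : c ≠ 0) (w : ι → R) : (C c * ∏ j, (X - C (w j))).roots = univ.val.map w := by
  rw [roots_C_mul _ hc, ← roots_multiset_prod_X_sub_C (univ.val.map w), Multiset.map_map]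
  rfl

theorem natDegree_C_mul_prod_X_sub_C_le {R ι : Type*} [CommRing R] [Nontrivial R] [Fintype ι]
    (c : R) (w : ι → R) :
    (C c * ∏ j, (X - C (w j))).natDegree ≤ Fintype.card ι :=
  natDegree_C_mul_le _ _ |>.trans_eq <| by
    simp [natDegree_prod_of_monic _ _ fun j _ ↦ monic_X_sub_C (w j)]

theorem coeff_C_mul_prod_X_sub_C_card {R ι : Type*} [CommRing R] [Nontrivial R] [Fintype ι]
    (c : R) (w : ι → R) :
    (C c * ∏ j, (X - C (w j))).coeff (Fintype.card ι) = c := by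
  have hmonic : (∏ j, (X - C (w j))).Monic :=
    monic_prod_of_monic _ _ fun j _ ↦ monic_X_sub_C (w j)
  have hdeg : (∏ j, (X - C (w j))).natDegree = Fintype.card ι := by
    simp [natDegree_prod_of_monic _ _ fun j _ ↦ monic_X_sub_C (w j)]
  rw [coeff_C_mul, ← hdeg, coeff_natDegree, hmonic.leadingCoeff, mul_one]

theorem eq_C_mul_prod_X_sub_C_of_tendsto {K ι α : Type*} [Field K] [Infinite K]
    [TopologicalSpace K] [IsTopologicalRing K] [T2Space K] [Fintype ι] {l : Filter α} [l.NeBot]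
    {c : α → K} {w : α → ι → K} {q : K[X]} {c₀ : K} {w₀ : ι → K}
    (hc : Tendsto c l (𝓝 c₀)) (hw : Tendsto w l (𝓝 w₀))
    (hlim : ∀ z, Tendsto (fun a ↦ c a * ∏ j, (z - w a j)) l (𝓝 (q.eval z))) :
    q = C c₀ * ∏ j, (X - C (w₀ j)) := by
  refine funext fun z ↦ tendsto_nhds_unique (hlim z) ?_
  simpa [eval_prod] using
    hc.mul (tendsto_finsetProd _ fun j _ ↦ tendsto_const_nhds.sub (tendsto_pi_nhds.1 hw j))

section RootLimits

variable {ι : Type*} [Fintype ι] {c : ℕ → ℂ} {w : ℕ → ι → ℂ} {q : ℂ[X]}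

theorem tendsto_coeff_C_mul_prod_X_sub_C
    (hlim : ∀ z, Tendsto (fun k ↦ c k * ∏ j, (z - w k j)) atTop (𝓝 (q.eval z)))
    (hq : q.natDegree ≤ Fintype.card ι) (m : ℕ) :
    Tendsto (fun k ↦ (C (c k) * ∏ j, (X - C (w k j))).coeff m) atTop (𝓝 (q.coeff m)) :=
  tendsto_coeff_of_tendsto_eval (fun k ↦ natDegree_C_mul_prod_X_sub_C_le _ _) hq
    (fun z ↦ by simpa [eval_prod] using hlim z) m

theorem tendsto_leadingCoeff_of_tendsto_mul_prod
    (hlim : ∀ z, Tendsto (fun k ↦ c k * ∏ j, (z - w k j)) atTop (𝓝 (q.eval z)))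
    (hq : q.natDegree = Fintype.card ι) :
    Tendsto c atTop (𝓝 q.leadingCoeff) := by
  have h := tendsto_coeff_C_mul_prod_X_sub_C hlim hq.le (Fintype.card ι)
  simp only [coeff_C_mul_prod_X_sub_C_card] at h
  rwa [leadingCoeff, hq]

theorem exists_norm_le_of_tendsto_mul_prod
    (hlim : ∀ z, Tendsto (fun k ↦ c k * ∏ j, (z - w k j)) atTop (𝓝 (q.eval z)))
    (hq : q.degree = Fintype.card ι) :
    ∃ R, ∀ᶠ k in atTop, ‖w k‖ ≤ R := by
  set p := fun k ↦ C (c k) * ∏ j, (X - C (w k j))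
  have hq0 : q ≠ 0 := by rintro rfl; simp at hq
  have hnat : q.natDegree = Fintype.card ι := natDegree_eq_of_degree_eq_some hq
  have hc0 : ∀ᶠ k in atTop, c k ≠ 0 :=
    (tendsto_leadingCoeff_of_tendsto_mul_prod hlim hnat).eventually_ne
      (leadingCoeff_ne_zero.2 hq0)
  have hmonic : ∀ k, (∏ j, (X - C (w k j))).Monic := fun k ↦
    monic_prod_of_monic _ _ fun j _ ↦ monic_X_sub_C _
  have hdeg : ∀ᶠ k in atTop, (p k).natDegree = q.natDegree := hc0.mono fun k hk ↦ by
    simp [p, natDegree_C_mul hk, natDegree_prod_of_monic _ _ fun j _ ↦ monic_X_sub_C (w k j),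
      hnat]
  have hbound : ∀ᶠ k in atTop, cauchyBound (p k) < cauchyBound q + 1 :=
    (tendsto_cauchyBound hq0 hdeg (tendsto_coeff_C_mul_prod_X_sub_C hlim hnat.le)).eventually
      (eventually_lt_nhds (lt_add_one _))
  refine ⟨cauchyBound q + 1, ?_⟩
  filter_upwards [hc0, hbound] with k hk hb
  refine (pi_norm_le_iff_of_nonneg (by positivity)).2 fun j ↦ ?_
  have hroot : (p k).IsRoot (w k j) := by
    simp [p, eval_prod, Finset.prod_eq_zero (mem_univ j)]
  have := hroot.norm_lt_cauchyBound (mul_ne_zero (C_ne_zero.2 hk) (hmonic k).ne_zero)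
  exact_mod_cast (this.trans hb).le

theorem card_le_card_roots_filter_of_tendsto_mul_prod
    (hlim : ∀ z, Tendsto (fun k ↦ c k * ∏ j, (z - w k j)) atTop (𝓝 (q.eval z)))
    (hq : q.degree = Fintype.card ι)
    {P : ℂ → Prop} [DecidablePred P] (hP : IsClosed {z | P z}) {J : Finset ι}
    (hJ : ∀ k, ∀ j ∈ J, P (w k j)) :
    #J ≤ Multiset.card (q.roots.filter P) := by
  have hnat : q.natDegree = Fintype.card ι := natDegree_eq_of_degree_eq_some hq
  obtain ⟨R, hR⟩ := exists_norm_le_of_tendsto_mul_prod hlim hq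
  obtain ⟨w₀, -, φ, hφ, hw⟩ := tendsto_subseq_of_frequently_bounded
    (Metric.isBounded_closedBall (x := 0) (r := R))
    (hR.mono fun k hk ↦ mem_closedBall_zero_iff.2 hk).frequently
  have hqw : q = C q.leadingCoeff * ∏ j, (X - C (w₀ j)) :=
    eq_C_mul_prod_X_sub_C_of_tendsto
      ((tendsto_leadingCoeff_of_tendsto_mul_prod hlim hnat).comp hφ.tendsto_atTop) hw
      fun z ↦ (hlim z).comp hφ.tendsto_atTop
  have hJ₀ : ∀ j ∈ J, P (w₀ j) := fun j hj ↦
    hP.mem_of_tendsto ((tendsto_pi_nhds.1 hw) j) (Eventually.of_forall fun k ↦ hJ _ j hj)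
  have hq0 : q.leadingCoeff ≠ 0 := by rw [leadingCoeff_ne_zero]; rintro rfl; simp at hq
  rw [hqw, roots_C_mul_prod_X_sub_C hq0, Multiset.filter_map, Multiset.card_map]
  exact card_le_card (t := univ.filter (P ∘ w₀)) fun j hj ↦
    mem_filter.2 ⟨mem_univ j, hJ₀ j hj⟩

end RootLimits

end Polynomial

theorem Matrix.det_mul_mul_conjTranspose_add_smul {R ι : Type*} [CommRing R] [StarRing R]
    [Fintype ι] [DecidableEq ι] (P M : Matrix ι ι R) (z : R) :
    det (P * M * Pᴴ + z • (P * M * Pᴴ)ᴴ) = det P * star (det P) * det (M + z • Mᴴ) := by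
  have h : P * M * Pᴴ + z • (P * M * Pᴴ)ᴴ = P * (M + z • Mᴴ) * Pᴴ := by
    simp only [conjTranspose_mul, conjTranspose_conjTranspose, Matrix.mul_add, Matrix.add_mul,
      Matrix.mul_smul, Matrix.smul_mul, Matrix.mul_assoc]
  rw [h, det_mul, det_mul, det_conjTranspose]
  ring

theorem Matrix.reindex_add_smul_conjTranspose {R m n : Type*} [Star R] [Add R] [SMul R R]
    (e : m ≃ n) (M : Matrix m m R) (z : R) :
    reindex e e M + z • (reindex e e M)ᴴ = reindex e e (M + z • Mᴴ) := by
  ext i j; simp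

theorem dsum_add_smul_conjTranspose {m n : ℕ} (M : Matrix (Fin m) (Fin m) ℂ)
    (N : Matrix (Fin n) (Fin n) ℂ) (z : ℂ) :
    dsum M N + z • (dsum M N)ᴴ = dsum (M + z • Mᴴ) (N + z • Nᴴ) := by
  rw [dsum, reindex_add_smul_conjTranspose, fromBlocks_conjTranspose, fromBlocks_smul,
    fromBlocks_add]
  simp [dsum]

theorem det_dsum {m n : ℕ} (M : Matrix (Fin m) (Fin m) ℂ) (N : Matrix (Fin n) (Fin n) ℂ) :
    det (dsum M N) = det M * det N := by
  rw [dsum, det_reindex_self, det_fromBlocks_zero₂₁]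

theorem finDsum_add_smul_conjTranspose : ∀ {q : ℕ} (p : Fin q → ℕ)
    (M : (i : Fin q) → Matrix (Fin (p i)) (Fin (p i)) ℂ) (z : ℂ),
    finDsum p M + z • (finDsum p M)ᴴ = finDsum p fun i ↦ M i + z • (M i)ᴴ
  | 0, _, _, _ => by ext i; exact i.elim0
  | _ + 1, p, M, z => by
    change dsum (M 0) (finDsum _ fun i ↦ M i.succ) +
        z • (dsum (M 0) (finDsum _ fun i ↦ M i.succ))ᴴ = dsum
      (M 0 + z • (M 0)ᴴ) (finDsum (fun i ↦ p i.succ) fun i ↦ M i.succ + z • (M i.succ)ᴴ)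
    rw [dsum_add_smul_conjTranspose, finDsum_add_smul_conjTranspose]

theorem det_finDsum : ∀ {q : ℕ} (p : Fin q → ℕ)
    (M : (i : Fin q) → Matrix (Fin (p i)) (Fin (p i)) ℂ), det (finDsum p M) = ∏ i, det (M i)
  | 0, _, _ => det_fin_zero
  | _ + 1, p, M => by
    change det (dsum (M 0) (finDsum (fun i ↦ p i.succ) fun i ↦ M i.succ)) = _
    rw [det_dsum, det_finDsum, Fin.prod_univ_succ]

theorem det_H2_add_smul_conjTranspose {μ : ℂ} (hμ : μ ≠ 0) (z : ℂ) :
    det (H2 μ + z • (H2 μ)ᴴ) = -star μ * ((z - -μ) * (z - -(star μ)⁻¹)) := by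
  have hμ' : starRingEnd ℂ μ ≠ 0 := star_ne_zero.2 hμ
  simp [H2, det_fin_two, conjTranspose_apply]
  field_simp
  ring

theorem det_diagonal_add_smul_conjTranspose {m : ℕ} {a : Fin m → ℂ} (ha : ∀ j, ‖a j‖ = 1)
    (z : ℂ) :
    det (diagonal a + z • (diagonal a)ᴴ) = ∏ j, star (a j) * (z - -a j ^ 2) := by
  rw [diagonal_conjTranspose, ← diagonal_smul, diagonal_add, det_diagonal]
  refine prod_congr rfl fun j _ ↦ ?_
  have h : starRingEnd ℂ (a j) * a j = 1 := by
    rw [Complex.conj_mul', ha, Complex.ofReal_one, one_pow]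
  simp only [Pi.smul_apply, Pi.star_apply, smul_eq_mul, Complex.star_def]
  linear_combination -a j * h

theorem eval_det_starPencil {n : ℕ} (A : Matrix (Fin n) (Fin n) ℂ) (z : ℂ) :
    (starPencil A).det.eval z = det (A + z • Aᴴ) := by
  rw [← coe_evalRingHom, RingHom.map_det]
  congr 1
  ext i j
  simp only [starPencil, RingHom.mapMatrix_apply, map_apply, Matrix.add_apply,
    Matrix.smul_apply, smul_eq_mul, coe_evalRingHom, eval_add, eval_mul, eval_C, eval_X]

theorem degree_det_starPencil {n : ℕ} {A : Matrix (Fin n) (Fin n) ℂ} (hA : IsUnit A) :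
    (starPencil A).det.degree = n := by
  have h : starPencil A = (X : ℂ[X]) • Aᴴ.map C + A.map C := add_comm _ _
  refine degree_eq_of_le_of_coeff_ne_zero (degree_le_of_natDegree_le ?_) ?_ <;> rw [h]
  · simpa using natDegree_det_X_add_C_le Aᴴ A
  · have hdet : det Aᴴ ≠ 0 := by
      rw [det_conjTranspose, star_ne_zero]
      exact ((isUnit_iff_isUnit_det A).1 hA).ne_zero
    simpa using (coeff_det_X_add_C_card Aᴴ A).trans_ne hdet

/-- The roots of `det (D + λ Dᴴ)` for `D = H₂(μ₁) ⊕ ⋯ ⊕ H₂(μ_ℓ) ⊕ diag(a)`: each `aⱼ` contributes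
`-aⱼ²`, each `H₂(μᵢ)` contributes `-μᵢ` and `-1/μ̄ᵢ`. -/
def bundleRoots {m ℓ : ℕ} (a : Fin m → ℂ) (mu : Fin ℓ → ℂ) : Fin m ⊕ Fin ℓ ⊕ Fin ℓ → ℂ :=
  Sum.elim (fun j ↦ -a j ^ 2) (Sum.elim (fun i ↦ -mu i) fun i ↦ -(star (mu i))⁻¹)

theorem exists_det_add_smul_conjTranspose_eq_mul_prod {n m ℓ : ℕ}
    (h : finSize (fun _ : Fin ℓ ↦ 2) + m = n) {mu : Fin ℓ → ℂ} (hmu : ∀ i, mu i ≠ 0)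
    {a : Fin m → ℂ} (ha : ∀ j, ‖a j‖ = 1) {P B : Matrix (Fin n) (Fin n) ℂ}
    (hB : B = P * reindex (finCongr h) (finCongr h) (dsum (pairH ℓ mu) (diagonal a)) * Pᴴ) :
    ∃ c : ℂ, ∀ z, det (B + z • Bᴴ) = c * ∏ j, (z - bundleRoots a mu j) := by
  refine ⟨det P * star (det P) * ((∏ i, -star (mu i)) * ∏ j, star (a j)), fun z ↦ ?_⟩
  rw [hB, det_mul_mul_conjTranspose_add_smul, reindex_add_smul_conjTranspose, det_reindex_self,
    dsum_add_smul_conjTranspose, det_dsum, pairH, finDsum_add_smul_conjTranspose, det_finDsum]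
  simp only [det_H2_add_smul_conjTranspose (hmu _), det_diagonal_add_smul_conjTranspose ha,
    bundleRoots, Fintype.prod_sum_type, Sum.elim_inl, Sum.elim_inr, prod_mul_distrib]
  ring

open Classical in
theorem card_unit_roots_ge_of_mem_closure_starBundle_general (n ℓ : ℕ) (hℓ : ℓ ≤ n / 2)
    (A : Matrix (Fin n) (Fin n) ℂ) (hA : IsUnit A)
    (μ : Fin ℓ → ℂ)
    (α : Fin (n - 2 * ℓ) → ℂ)
    (hcl : A ∈ closure {B : Matrix (Fin n) (Fin n) ℂ |
      ∃ (h : finSize (fun _ : Fin ℓ => 2) + (n - 2 * ℓ) = n)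
        (mu : Fin ℓ → ℂ) (a : Fin (n - 2 * ℓ) → ℂ)
        (P : Matrix (Fin n) (Fin n) ℂ),
        IsUnit P ∧ (∀ i, 1 < ‖mu i‖) ∧ (∀ j, ‖a j‖ = 1) ∧
        (∀ i i', mu i ≠ mu i' ↔ μ i ≠ μ i') ∧
        (∀ j j', a j ^ 2 ≠ a j' ^ 2 ↔ α j ^ 2 ≠ α j' ^ 2) ∧
        B = P * Matrix.reindex (finCongr h) (finCongr h)
              (dsum (pairH ℓ mu) (Matrix.diagonal a)) * Pᴴ}) :
    (n - 2 * ℓ : ℕ) ≤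
      Multiset.card
        ((starPencil A).det.roots.filter fun z => ‖z‖ = 1) := by
  have : FrechetUrysohnSpace (Matrix (Fin n) (Fin n) ℂ) :=
    inferInstanceAs (FrechetUrysohnSpace (Fin n → Fin n → ℂ))
  obtain ⟨B, hB, hBA⟩ := mem_closure_iff_seq_limit.1 hcl
  choose h mu a P _ hmu ha _ _ hBeq using hB
  choose c hc using fun k ↦ exists_det_add_smul_conjTranspose_eq_mul_prod (h k)
    (fun i ↦ norm_pos_iff.1 (one_pos.trans (hmu k i))) (ha k) (hBeq k)
  have hlim : ∀ z, Tendsto (fun k ↦ c k * ∏ j, (z - bundleRoots (a k) (mu k) j)) atTop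
      (𝓝 ((starPencil A).det.eval z)) := by
    intro z
    simp only [← hc, eval_det_starPencil]
    have hcont : Continuous fun M : Matrix (Fin n) (Fin n) ℂ ↦ det (M + z • Mᴴ) := by fun_prop
    exact (hcont.tendsto A).comp hBA
  have hdeg : (starPencil A).det.degree = Fintype.card (Fin (n - 2 * ℓ) ⊕ Fin ℓ ⊕ Fin ℓ) := by
    rw [degree_det_starPencil hA]
    simp only [Fintype.card_sum, Fintype.card_fin]
    congr 1
    omega
  simpa using card_le_card_roots_filter_of_tendsto_mul_prod hlim hdeg
    (isClosed_eq continuous_norm continuous_const) (J := univ.map .inl)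
    fun k j hj ↦ by obtain ⟨j, -, rfl⟩ := mem_map.1 hj; simp [bundleRoots, ha k j]

open Classical in
/-- **Lemma 3.9.**  If `A` is invertible and belongs to the closure of the *congruence
bundle `ℬ*(H_2(μ_1) ⊕ ⋯ ⊕ H_2(μ_ℓ) ⊕ diag(α_1, …, α_{n-2ℓ}))`, then the polynomial
`det(A + λ Aᴴ)` has at least `n - 2ℓ` roots of modulus `1`, counted with
multiplicity. -/
theorem card_unit_roots_ge_of_mem_closure_starBundle (n ℓ : ℕ) (hℓ : ℓ ≤ n / 2)
    (A : Matrix (Fin n) (Fin n) ℂ) (hA : IsUnit A)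
    (μ : Fin ℓ → ℂ) (hμ : ∀ i, 1 < ‖μ i‖)
    (α : Fin (n - 2 * ℓ) → ℂ) (hα : ∀ j, ‖α j‖ = 1)
    (hcl : A ∈ closure {B : Matrix (Fin n) (Fin n) ℂ |
      ∃ (h : finSize (fun _ : Fin ℓ => 2) + (n - 2 * ℓ) = n)
        (mu : Fin ℓ → ℂ) (a : Fin (n - 2 * ℓ) → ℂ)
        (P : Matrix (Fin n) (Fin n) ℂ),
        IsUnit P ∧ (∀ i, 1 < ‖mu i‖) ∧ (∀ j, ‖a j‖ = 1) ∧
        (∀ i i', mu i ≠ mu i' ↔ μ i ≠ μ i') ∧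
        (∀ j j', a j ^ 2 ≠ a j' ^ 2 ↔ α j ^ 2 ≠ α j' ^ 2) ∧
        B = P * Matrix.reindex (finCongr h) (finCongr h)
              (dsum (pairH ℓ mu) (Matrix.diagonal a)) * Pᴴ}) :
    (n - 2 * ℓ : ℕ) ≤
      Multiset.card
        ((starPencil A).det.roots.filter fun z => ‖z‖ = 1) :=
  card_unit_roots_ge_of_mem_closure_starBundle_general n ℓ hℓ A hA μ α hcl
end
end
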